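/- arXiv:1602.02769 — 5 statements merged into one kernel-verified Lean document; each statement's English description precedes it below -/
import Mathlib

section
/- Let k ≥ 1 and let A be a k-element multiset of complex numbers. Then for every 1 ≤ i ≤ k one has e_i(X) − e_i(A) ∈ I_A, where e_i(X) is the i-th elementary symmetric polynomial in x_1,…,x_k, e_i(A) ∈ ℂ is the i-th elementary symmetric function of the multiset A, and I_A is the ideal of Sym(X) generated by {h_j(X−A) : j ≥ 1}. -/
open MvPolynomial

set_option synthInstance.maxHeartbeats 400000
set_option maxHeartbeats 1000000

noncomputable section

/-- The algebra `Sym(X)` of symmetric polynomials in the alphabet `X = {x_1, …, x_k}`. -/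
abbrev SymP (k : ℕ) : Subalgebra ℂ (MvPolynomial (Fin k) ℂ) :=
  MvPolynomial.symmetricSubalgebra (Fin k) ℂ

/-- The complete homogeneous symmetric polynomial `h_a(X)` as an element of `Sym(X)`. -/
def hX (k a : ℕ) : SymP k :=
  ⟨MvPolynomial.hsymm (Fin k) ℂ a,
    (mem_symmetricSubalgebra _).mpr (MvPolynomial.hsymm_isSymmetric _ _ a)⟩

/-- The elementary symmetric polynomial `e_i(X)` as an element of `Sym(X)`. -/
def eX (k i : ℕ) : SymP k :=
  ⟨MvPolynomial.esymm (Fin k) ℂ i,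
    (mem_symmetricSubalgebra _).mpr (MvPolynomial.esymm_isSymmetric _ _ i)⟩

/-- `h_i(X − S) := Σ_{a+b=i} (−1)^b e_b(S) h_a(X)`, an element of `Sym(X)`. -/
def hXS (k : ℕ) (S : Multiset ℂ) (i : ℕ) : SymP k :=
  ∑ p ∈ Finset.HasAntidiagonal.antidiagonal i, ((-1 : ℂ) ^ p.2 * S.esymm p.2) • hX k p.1

/-- The ideal `I_Σ` of `Sym(X)` generated by `h_{N−k+i}(X−Σ)` for `i > 0`. -/
def defIdeal (k N : ℕ) (S : Multiset ℂ) : Ideal (SymP k) :=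
  Ideal.span {f | ∃ i : ℕ, 0 < i ∧ f = hXS k S (N - k + i)}

/-- `π_A = Π_{λ ∈ Σ∖A} Π_{j=1}^k (λ − x_j)` as a polynomial. -/
def piPoly (k : ℕ) (S A : Multiset ℂ) : MvPolynomial (Fin k) ℂ :=
  ((S - A).map fun lam => ∏ j : Fin k, (C lam - X j)).prod

lemma piPoly_isSymmetric (k : ℕ) (S A : Multiset ℂ) : (piPoly k S A).IsSymmetric := by
  intro e
  unfold piPoly
  rw [map_multiset_prod, Multiset.map_map]
  congr 1
  refine Multiset.map_congr rfl ?_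
  intro lam _
  simp only [Function.comp_apply, map_prod, map_sub, rename_C, rename_X]
  exact Equiv.prod_comp e fun j => C lam - X j

/-- `π_A` as an element of `Sym(X)`. -/
def piS (k : ℕ) (S A : Multiset ℂ) : SymP k :=
  ⟨piPoly k S A, (mem_symmetricSubalgebra _).mpr (piPoly_isSymmetric k S A)⟩

/-! With `E(t) = ∏ⱼ (1 - xⱼ t) = Σ (-1)ⁿ eₙ(X) tⁿ` and `H(t) = ∏ⱼ 1 / (1 - xⱼ t) = Σ hₙ(X) tⁿ`,
the generating series of the `hₙ(X − A)` is `H(t) E_A(t)`, where `E_A(t) = Σ (-1)ⁿ eₙ(A) tⁿ`.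
Since `E H = 1`, comparing coefficients of `tⁱ` in `E · (H E_A) = E_A` gives
`Σ_{a+b=i} (-1)ᵃ e_a(X) h_b(X − A) = (-1)ⁱ eᵢ(A)`. The summand with `b = 0` is `(-1)ⁱ eᵢ(X)`,
and every other summand is a multiple of a generator of `I_A`. -/

namespace PowerSeries

variable {R : Type*} [CommRing R]

theorem one_sub_C_mul_X_mul_mk_pow (a : R) : (1 - C a * X) * mk (a ^ ·) = 1 := by
  simpa [rescale_X, rescale_mk, mul_comm] using congrArg (rescale a) (mk_one_mul_one_sub_eq_one R)

theorem coeff_prod_one_add_C_mul_X {ι : Type*} (s : Finset ι) (a : ι → R) (n : ℕ) :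
    coeff n (∏ i ∈ s, (1 + C (a i) * X)) = (s.val.map a).esymm n := by
  classical
  simp_rw [Finset.prod_one_add, Finset.prod_mul_distrib, Finset.prod_const, ← map_prod,
    map_sum, coeff_C_mul_X_pow, Finset.esymm_map_val, Finset.powersetCard_eq_filter,
    Finset.sum_filter, eq_comm]

end PowerSeries

namespace MvPolynomial

variable {σ : Type*} [Fintype σ] [DecidableEq σ] (R : Type*)

theorem coeff_prod_mk_X_pow [CommSemiring R] (n : ℕ) :
    PowerSeries.coeff n (∏ i : σ, PowerSeries.mk fun m => (X i : MvPolynomial σ R) ^ m) =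
      hsymm σ R n := by
  let := Fintype.ofEquiv _ (Sym.equivNatSum σ n)
  rw [PowerSeries.coeff_prod, Finset.sum_subtype (p := fun P => P.sum (fun _ => id) = n) _
    (by simp [Finset.mem_finsuppAntidiag, Finsupp.sum_fintype]), hsymm]
  refine (Fintype.sum_equiv (Sym.equivNatSum σ n) _ _ fun s => ?_).symm
  simp only [PowerSeries.coeff_mk, Sym.coe_equivNatSum_apply_apply,
    Finset.prod_multiset_map_count]
  exact Finset.prod_subset (Finset.subset_univ _) (by simp +contextual)

theorem mk_signed_esymm_mul_mk_hsymm [CommRing R] :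
    PowerSeries.mk (fun n => (-1) ^ n * esymm σ R n) * PowerSeries.mk (hsymm σ R) = 1 := by
  have hE : PowerSeries.mk (fun n => (-1) ^ n * esymm σ R n) =
      ∏ i : σ, (1 - PowerSeries.C (X i) * PowerSeries.X) := by
    ext n : 1
    simp_rw [sub_eq_add_neg, ← neg_mul, ← map_neg]
    rw [PowerSeries.coeff_prod_one_add_C_mul_X, PowerSeries.coeff_mk, esymm_eq_multiset_esymm,
      ← Multiset.esymm_neg, Multiset.map_map]
    rfl
  have hH : PowerSeries.mk (hsymm σ R) = ∏ i : σ, PowerSeries.mk fun m => (X i) ^ m := by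
    ext n : 1
    rw [PowerSeries.coeff_mk, coeff_prod_mk_X_pow]
  rw [hE, hH, ← Finset.prod_mul_distrib]
  exact Finset.prod_eq_one fun i _ => PowerSeries.one_sub_C_mul_X_mul_mk_pow _

end MvPolynomial

open Finset.HasAntidiagonal

theorem coe_hXS (k : ℕ) (A : Multiset ℂ) (n : ℕ) :
    (hXS k A n : MvPolynomial (Fin k) ℂ) = PowerSeries.coeff n
      (PowerSeries.mk (hsymm (Fin k) ℂ) * PowerSeries.mk fun b => C ((-1) ^ b * A.esymm b)) := by
  simp [hXS, hX, PowerSeries.coeff_mul, smul_eq_C_mul, mul_comm]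

theorem hXS_zero (k : ℕ) (A : Multiset ℂ) : hXS k A 0 = 1 := by
  ext1
  simp [hXS, hX, Multiset.esymm]

theorem sum_antidiagonal_smul_eX_mul_hXS (k : ℕ) (A : Multiset ℂ) (n : ℕ) :
    ∑ p ∈ antidiagonal n, (-1 : ℂ) ^ p.1 • (eX k p.1 * hXS k A p.2) =
      algebraMap ℂ (SymP k) ((-1) ^ n * A.esymm n) := by
  set E := PowerSeries.mk fun n => (-1) ^ n * esymm (Fin k) ℂ n
  set H := PowerSeries.mk (hsymm (Fin k) ℂ)
  set EA := PowerSeries.mk fun b => C ((-1 : ℂ) ^ b * A.esymm b)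
  have key : E * (H * EA) = EA := by rw [← mul_assoc, mk_signed_esymm_mul_mk_hsymm, one_mul]
  apply Subtype.ext
  calc _ = ∑ p ∈ antidiagonal n, PowerSeries.coeff p.1 E * PowerSeries.coeff p.2 (H * EA) := by
        simp only [AddSubmonoidClass.coe_finsetSum, SetLike.val_smul, MulMemClass.coe_mul, eX,
          coe_hXS, E, PowerSeries.coeff_mk, smul_eq_C_mul, map_pow, map_neg, map_one, mul_assoc]
        rfl
    _ = _ := by rw [← PowerSeries.coeff_mul, key, PowerSeries.coeff_mk]; rfl

theorem statement5_general (k : ℕ) (A : Multiset ℂ) (i : ℕ) :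
    eX k i - algebraMap ℂ (SymP k) (A.esymm i) ∈
      Ideal.span {f | ∃ j : ℕ, 1 ≤ j ∧ f = hXS k A j} := by
  set I := Ideal.span {f | ∃ j : ℕ, 1 ≤ j ∧ f = hXS k A j}
  set c : ℂ := (-1) ^ i
  set rest := ∑ p ∈ (antidiagonal i).erase (i, 0), (-1 : ℂ) ^ p.1 • (eX k p.1 * hXS k A p.2)
  have hrest : rest ∈ I := by
    refine Ideal.sum_mem _ fun p hp => Submodule.smul_of_tower_mem _ _
      (Ideal.mul_mem_left _ _ (Ideal.subset_span ⟨p.2, ?_, rfl⟩))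
    obtain ⟨hne, hp⟩ := Finset.mem_erase.1 hp
    rw [mem_antidiagonal] at hp
    by_contra! h
    exact hne (Prod.ext (by omega) (by omega))
  have hsplit : c • eX k i + rest = c • algebraMap ℂ (SymP k) (A.esymm i) := by
    have hsum := Finset.add_sum_erase _ (fun p => (-1 : ℂ) ^ p.1 • (eX k p.1 * hXS k A p.2))
      (mem_antidiagonal.2 (add_zero i) : (i, 0) ∈ antidiagonal i)
    rw [sum_antidiagonal_smul_eX_mul_hXS, hXS_zero, mul_one] at hsum
    rw [hsum, map_mul, Algebra.smul_def]
  have hcc : c * c = 1 := by rw [← mul_pow]; norm_num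
  have hdiff : eX k i - algebraMap ℂ (SymP k) (A.esymm i) = -(c • rest) := by
    rw [← one_smul ℂ (eX k i - _), ← hcc, mul_smul, smul_sub, ← hsplit, sub_add_cancel_left,
      smul_neg]
  rw [hdiff]
  exact neg_mem (Submodule.smul_of_tower_mem _ _ hrest)

/-- For a `k`-element multiset `A` of complex numbers and every `1 ≤ i ≤ k`,
one has `e_i(X) − e_i(A) ∈ I_A`, where `I_A` is the ideal of `Sym(X)` generated by the
`h_j(X−A)`, `j ≥ 1`. -/
theorem statement5 (k : ℕ) (hk : 1 ≤ k) (A : Multiset ℂ) (hAcard : Multiset.card A = k)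
    (i : ℕ) (hi1 : 1 ≤ i) (hik : i ≤ k) :
    eX k i - algebraMap ℂ (SymP k) (A.esymm i) ∈
      Ideal.span {f | ∃ j : ℕ, 1 ≤ j ∧ f = hXS k A j} :=
  statement5_general k A i
end
end

section
/- Let m ≥ 1, let o(1),…,o(m) ≥ 1 be integers, and fix an index i with k := o(i) ≤ o(l) for all l. Let P := ℂ[x_{l,j}, x'_{l,j} : 1 ≤ l ≤ m, 1 ≤ j ≤ o(l)] be a polynomial ring; with the conventions x_{l,0} = x'_{l,0} = 1 and x_{l,j} = x'_{l,j} = 0 for j > o(l), define for each j ≥ 1 the elements E_j := Σ_{j_1+⋯+j_m = j} Π_{l=1}^m x_{l,j_l} and E'_j := Σ_{j_1+⋯+j_m = j} Π_{l=1}^m x'_{l,j_l}. Let T := P/⟨E'_j − E_j : 1 ≤ j ≤ k⟩. Then the composite of the inclusion of the polynomial subring of P generated by all variables except x'_{i,1},…,x'_{i,k} with the quotient map P → T is an isomorphism of ℂ-algebras; in particular T is a polynomial ring. (Identifying x_{l,j} with the j-th elementary symmetric polynomial e_j(X_l) of an alphabet X_l of size o(l), and x'_{l,j} with e_j(X'_l),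 this is the statement that 𝒯 = Sym(X_1|…|X_m|X'_1|…|X'_m)/⟨e_j(⊔_l X'_l) − e_j(⊔_l X_l) : 1 ≤ j ≤ k⟩ is a polynomial ring, with the canonical map from the subring omitting e_1(X'_i),…,e_k(X'_i) being an isomorphism.) -/
open MvPolynomial

set_option synthInstance.maxHeartbeats 400000
set_option maxHeartbeats 1000000

noncomputable section

/-- The index type of the unprimed (resp. primed) variables: `⟨l, j⟩` stands for
`x_{l,j+1}` (resp. `x'_{l,j+1}`). -/
abbrev Idx7 (m : ℕ) (o : Fin m → ℕ) : Type := Σ l : Fin m, Fin (o l)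

/-- The variables of `P`: `Sum.inl` are the `x_{l,j}`, `Sum.inr` are the `x'_{l,j}`. -/
abbrev V7 (m : ℕ) (o : Fin m → ℕ) : Type := Idx7 m o ⊕ Idx7 m o

/-- The generator `x_{l,j}` (for `primed = false`) resp. `x'_{l,j}` (for `primed = true`),
with the conventions `x_{l,0} = x'_{l,0} = 1` and `x_{l,j} = x'_{l,j} = 0` for `j > o l`. -/
def xvar (m : ℕ) (o : Fin m → ℕ) (primed : Bool) (l : Fin m) (j : ℕ) :
    MvPolynomial (V7 m o) ℂ :=
  if hj : j = 0 then 1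
  else if h : j ≤ o l then
    X ((if primed then Sum.inr else Sum.inl) ⟨l, ⟨j - 1, by omega⟩⟩)
  else 0

/-- `E_j := Σ_{j_1+⋯+j_m = j} Π_{l=1}^m x_{l,j_l}` (resp. `E'_j` for `primed = true`). -/
def Epoly (m : ℕ) (o : Fin m → ℕ) (primed : Bool) (j : ℕ) : MvPolynomial (V7 m o) ℂ :=
  ∑ t ∈ Finset.Nat.antidiagonalTuple m j, ∏ l : Fin m, xvar m o primed l (t l)

/-- The ideal `⟨E'_j − E_j : 1 ≤ j ≤ k⟩`. -/
def J7 (m : ℕ) (o : Fin m → ℕ) (k : ℕ) : Ideal (MvPolynomial (V7 m o) ℂ) :=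
  Ideal.span {f | ∃ j : ℕ, 1 ≤ j ∧ j ≤ k ∧ f = Epoly m o true j - Epoly m o false j}

/-- The set of all variables except `x'_{i,1}, …, x'_{i,o i}`. -/
def good7 (m : ℕ) (o : Fin m → ℕ) (i : Fin m) : Set (V7 m o) :=
  {v | ∀ p : Idx7 m o, v = Sum.inr p → p.1 ≠ i}

/-!
Write `A_l(t) = Σ_j x_{l,j} t^j` and `A'_l(t) = Σ_j x'_{l,j} t^j`. The relations `E'_j = E_j`
for `j ≤ k` say exactly that `∏_l A'_l ≡ ∏_l A_l mod t^(k+1)`. As every `A'_l` has constant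
term `1`, this is equivalent to `A'_i ≡ ∏_l A_l · (∏_{l ≠ i} A'_l)⁻¹ mod t^(k+1)`, which expresses
`x'_{i,1}, …, x'_{i,k}` through the other variables. Used as a substitution, it gives a retraction
of `P` onto the subring that kills the relations (injectivity); read in `T`, it shows that `T` is
generated by the other variables (surjectivity).
-/

open scoped PowerSeries

namespace PowerSeries

variable {R : Type*} [CommRing R]

theorem coeff_prod_mk {m : ℕ} (f : Fin m → ℕ → R) (n : ℕ) :
    coeff n (∏ l, mk (f l)) = ∑ t ∈ Finset.Nat.antidiagonalTuple m n, ∏ l, f l (t l) := by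
  rw [coeff_prod]
  refine Finset.sum_nbij' (fun t ↦ ⇑t) Finsupp.equivFunOnFinite.symm ?_ ?_ ?_ ?_ ?_ <;>
    simp [Finset.Nat.mem_antidiagonalTuple]

theorem X_pow_dvd_mul_sub_iff {a b h h' : R⟦X⟧} (hh : h * h' = 1) (n : ℕ) :
    X ^ n ∣ a * h - b ↔ X ^ n ∣ a - b * h' := by
  constructor
  · intro hd
    convert hd.mul_right h' using 1
    linear_combination (-a) * hh
  · intro hd
    convert hd.mul_right h using 1
    linear_combination b * hh

theorem coeff_eq_of_X_pow_dvd_sub {a b : R⟦X⟧} {n j : ℕ} (hd : X ^ n ∣ a - b) (hj : j < n) :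
    coeff j a = coeff j b := by
  rw [← sub_eq_zero, ← map_sub]
  exact X_pow_dvd_iff.1 hd j hj

end PowerSeries

namespace MvPolynomial

variable {R σ : Type*} [CommRing R]

open Classical in
def retractSupported (s : Set σ) (c : σ → MvPolynomial s R) :
    MvPolynomial σ R →ₐ[R] MvPolynomial s R :=
  aeval fun v ↦ if h : v ∈ s then X ⟨v, h⟩ else c v

variable {s : Set σ}

theorem retractSupported_X_of_notMem (c : σ → MvPolynomial s R) {v : σ} (hv : v ∉ s) :
    retractSupported s c (X v) = c v := by
  rw [retractSupported, aeval_X, dif_neg hv]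

theorem retractSupported_rename (c : σ → MvPolynomial s R) (q : MvPolynomial s R) :
    retractSupported s c (rename Subtype.val q) = q := by
  rw [retractSupported, aeval_rename]
  convert aeval_X_left_apply q
  ext1 v
  simp

theorem rename_retractSupported (c : σ → MvPolynomial s R) {p : MvPolynomial σ R}
    (hp : p ∈ supported R s) : rename Subtype.val (retractSupported s c p) = p := by
  rw [supported_eq_range_rename] at hp
  obtain ⟨q, rfl⟩ := hp
  rw [AlgHom.toRingHom_eq_coe, RingHom.coe_coe, retractSupported_rename]

theorem bijective_mk_comp_supported_val (I : Ideal (MvPolynomial σ R))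
    (φ : MvPolynomial σ R →+* MvPolynomial s R)
    (hφ : ∀ p ∈ supported R s, rename Subtype.val (φ p) = p) (hI : I ≤ RingHom.ker φ)
    (hgen : ∀ v ∉ s, Ideal.Quotient.mk I (X v) ∈
      ((Ideal.Quotient.mkₐ R I).comp (supported R s).val).range) :
    Function.Bijective ((Ideal.Quotient.mkₐ R I).comp (supported R s).val) := by
  set θ := (Ideal.Quotient.mkₐ R I).comp (supported R s).val
  constructor
  · intro p q hpq
    have hφpq : φ p = φ q := by
      rw [← sub_eq_zero, ← map_sub]
      exact hI (Ideal.Quotient.eq.1 hpq)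
    exact Subtype.ext (by rw [← hφ p p.2, ← hφ q q.2, hφpq])
  · have hX (v : σ) : Ideal.Quotient.mk I (X v) ∈ θ.range := by
      by_cases hv : v ∈ s
      · exact ⟨⟨X v, Algebra.subset_adjoin (Set.mem_image_of_mem X hv)⟩, rfl⟩
      · exact hgen v hv
    suffices ∀ p, Ideal.Quotient.mk I p ∈ θ.range from
      fun y ↦ (Ideal.Quotient.mk_surjective y).elim fun p hp ↦ hp ▸ this p
    intro p
    induction p using MvPolynomial.induction_on with
    | C a => exact ⟨algebraMap R _ a, rfl⟩
    | add p q hp hq => rw [map_add]; exact add_mem hp hq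
    | mul_X p v hp => rw [map_mul]; exact mul_mem hp (hX v)

end MvPolynomial

section GeneratingSeries

variable (m : ℕ) (o : Fin m → ℕ)

def xseries (primed : Bool) (l : Fin m) : (MvPolynomial (V7 m o) ℂ)⟦X⟧ :=
  PowerSeries.mk (xvar m o primed l)

theorem constantCoeff_map_xseries {B : Type*} [CommRing B] (f : MvPolynomial (V7 m o) ℂ →+* B)
    (primed : Bool) (l : Fin m) :
    PowerSeries.constantCoeff (PowerSeries.map f (xseries m o primed l)) = 1 := by
  rw [← PowerSeries.coeff_zero_eq_constantCoeff_apply, PowerSeries.coeff_map, xseries,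
    PowerSeries.coeff_mk, xvar, dif_pos rfl, map_one]

theorem coeff_map_prod_xseries {B : Type*} [CommRing B] (f : MvPolynomial (V7 m o) ℂ →+* B)
    (primed : Bool) (j : ℕ) :
    PowerSeries.coeff j (PowerSeries.map f (∏ l, xseries m o primed l)) =
      f (Epoly m o primed j) := by
  simp only [PowerSeries.coeff_map, xseries, PowerSeries.coeff_prod_mk, Epoly]

theorem xvar_true_succ (l : Fin m) (j : Fin (o l)) :
    xvar m o true l (j + 1) = X (Sum.inr ⟨l, j⟩) := by
  rw [xvar, dif_neg j.val.succ_ne_zero, dif_pos (Nat.succ_le_of_lt j.isLt)]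
  rfl

theorem Epoly_zero (primed : Bool) : Epoly m o primed 0 = 1 := by
  simp [Epoly, Finset.Nat.antidiagonalTuple_zero_right, xvar]

theorem J7_le_ker_iff {B : Type*} [CommRing B] (k : ℕ) (f : MvPolynomial (V7 m o) ℂ →+* B) :
    J7 m o k ≤ RingHom.ker f ↔
      PowerSeries.X ^ (k + 1) ∣ PowerSeries.map f (∏ l, xseries m o true l) -
        PowerSeries.map f (∏ l, xseries m o false l) := by
  simp only [PowerSeries.X_pow_dvd_iff, map_sub, coeff_map_prod_xseries, sub_eq_zero,
    Order.lt_add_one_iff]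
  rw [J7, Ideal.span_le]
  constructor
  · rintro h (_ | j) hj
    · rw [Epoly_zero, Epoly_zero]
    · simpa [sub_eq_zero] using h ⟨j + 1, by omega, hj, rfl⟩
  · rintro h _ ⟨j, -, hj, rfl⟩
    simp [h j hj]

variable (i : Fin m)

theorem mem_good7 {primed : Bool} {l : Fin m} (h : primed = false ∨ l ≠ i) (j : Fin (o l)) :
    (if primed then Sum.inr else Sum.inl) ⟨l, j⟩ ∈ good7 m o i := by
  intro p hp
  rcases h with rfl | hl
  · simp at hp
  · cases primed <;>
      simp only [Bool.false_eq_true, if_true, if_false, Sum.inr.injEq, reduceCtorEq] at hp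
    exact hp ▸ hl

theorem xvar_mem_supported {primed : Bool} {l : Fin m} (h : primed = false ∨ l ≠ i) (j : ℕ) :
    xvar m o primed l j ∈ supported ℂ (good7 m o i) := by
  by_cases h0 : j = 0
  · rw [xvar, dif_pos h0]
    exact one_mem _
  by_cases hle : j ≤ o l
  · rw [xvar, dif_neg h0, dif_pos hle]
    exact X_mem_supported.2 (mem_good7 m o i h _)
  · rw [xvar, dif_neg h0, dif_neg hle]
    exact zero_mem _

local notation "ρ" =>
  AlgHom.toRingHom (retractSupported (good7 m o i) (0 : V7 m o → MvPolynomial (good7 m o i) ℂ))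

theorem map_xseries_eq_map_comp_rename {B : Type*} [CommRing B]
    (f : MvPolynomial (V7 m o) ℂ →+* B) {primed : Bool} {l : Fin m} (h : primed = false ∨ l ≠ i) :
    PowerSeries.map f (xseries m o primed l) =
      PowerSeries.map (f.comp (rename Subtype.val).toRingHom)
        (PowerSeries.map ρ (xseries m o primed l)) := by
  ext j
  simp [xseries, rename_retractSupported _ (xvar_mem_supported m o i h j)]

def primedCofactor : (MvPolynomial (good7 m o i) ℂ)⟦X⟧ :=
  ∏ l ∈ Finset.univ.erase i, PowerSeries.map ρ (xseries m o true l)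

def unprimedProduct : (MvPolynomial (good7 m o i) ℂ)⟦X⟧ :=
  ∏ l, PowerSeries.map ρ (xseries m o false l)

theorem primedCofactor_mul_invOfUnit :
    primedCofactor m o i * PowerSeries.invOfUnit (primedCofactor m o i) 1 = 1 :=
  PowerSeries.mul_invOfUnit _ _ (by
    simp [primedCofactor, constantCoeff_map_xseries])

def solvedSeries : (MvPolynomial (good7 m o i) ℂ)⟦X⟧ :=
  unprimedProduct m o i * PowerSeries.invOfUnit (primedCofactor m o i) 1

theorem constantCoeff_solvedSeries : PowerSeries.constantCoeff (solvedSeries m o i) = 1 := by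
  simp [solvedSeries, unprimedProduct, constantCoeff_map_xseries]

theorem map_prod_xseries_true {B : Type*} [CommRing B] (f : MvPolynomial (V7 m o) ℂ →+* B) :
    PowerSeries.map f (∏ l, xseries m o true l) =
      PowerSeries.map f (xseries m o true i) *
        PowerSeries.map (f.comp (rename Subtype.val).toRingHom) (primedCofactor m o i) := by
  rw [← Finset.mul_prod_erase _ _ (Finset.mem_univ i), map_mul, map_prod, primedCofactor, map_prod]
  congr 1
  refine Finset.prod_congr rfl fun l hl ↦ ?_
  exact map_xseries_eq_map_comp_rename m o i f (Or.inr (Finset.ne_of_mem_erase hl))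

theorem map_prod_xseries_false {B : Type*} [CommRing B] (f : MvPolynomial (V7 m o) ℂ →+* B) :
    PowerSeries.map f (∏ l, xseries m o false l) =
      PowerSeries.map (f.comp (rename Subtype.val).toRingHom) (unprimedProduct m o i) := by
  rw [map_prod, unprimedProduct, map_prod]
  exact Finset.prod_congr rfl fun l _ ↦ map_xseries_eq_map_comp_rename m o i f (Or.inl rfl)

def solvePrimed : MvPolynomial (V7 m o) ℂ →ₐ[ℂ] MvPolynomial (good7 m o i) ℂ :=
  retractSupported (good7 m o i)
    (Sum.elim 0 fun p ↦ PowerSeries.coeff ((p.2 : ℕ) + 1) (solvedSeries m o i))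

theorem exists_eq_inr_of_notMem_good7 {v : V7 m o} (hv : v ∉ good7 m o i) :
    ∃ j : Fin (o i), v = Sum.inr ⟨i, j⟩ := by
  simp only [good7, Set.mem_ofPred_eq, not_forall, not_not] at hv
  obtain ⟨⟨l, j⟩, rfl, rfl⟩ := hv
  exact ⟨j, rfl⟩

theorem X_pow_dvd_map_xseries_sub_solvedSeries :
    PowerSeries.X ^ (o i + 1) ∣
      PowerSeries.map (solvePrimed m o i).toRingHom (xseries m o true i) - solvedSeries m o i := by
  rw [PowerSeries.X_pow_dvd_iff]
  rintro (_ | j) hj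
  · rw [PowerSeries.coeff_zero_eq_constantCoeff_apply, map_sub, constantCoeff_map_xseries,
      constantCoeff_solvedSeries, sub_self]
  · have hv : (Sum.inr ⟨i, ⟨j, by omega⟩⟩ : V7 m o) ∉ good7 m o i := fun h ↦ h _ rfl rfl
    rw [map_sub, PowerSeries.coeff_map, xseries, PowerSeries.coeff_mk,
      xvar_true_succ m o i ⟨j, by omega⟩, AlgHom.toRingHom_eq_coe, RingHom.coe_coe, solvePrimed,
      retractSupported_X_of_notMem _ hv, Sum.elim_inr, sub_self]

theorem J7_le_ker_solvePrimed : J7 m o (o i) ≤ RingHom.ker (solvePrimed m o i).toRingHom := by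
  have hid : (solvePrimed m o i).toRingHom.comp (rename Subtype.val).toRingHom = RingHom.id _ :=
    RingHom.ext (retractSupported_rename _)
  rw [J7_le_ker_iff, map_prod_xseries_true m o i, map_prod_xseries_false m o i, hid,
    PowerSeries.map_id]
  exact (PowerSeries.X_pow_dvd_mul_sub_iff (primedCofactor_mul_invOfUnit m o i) _).2
    (X_pow_dvd_map_xseries_sub_solvedSeries m o i)

theorem mk_X_eq_mk_rename_coeff_solvedSeries (j : Fin (o i)) :
    Ideal.Quotient.mk (J7 m o (o i)) (X (Sum.inr ⟨i, j⟩)) =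
      Ideal.Quotient.mk (J7 m o (o i))
        (rename Subtype.val (PowerSeries.coeff (j + 1) (solvedSeries m o i))) := by
  set π := Ideal.Quotient.mk (J7 m o (o i))
  set θ := π.comp (rename Subtype.val).toRingHom
  have hrel := (J7_le_ker_iff m o (o i) π).1 (by rw [Ideal.mk_ker])
  have hinv : PowerSeries.map θ (primedCofactor m o i) *
      PowerSeries.map θ (PowerSeries.invOfUnit (primedCofactor m o i) 1) = 1 := by
    rw [← map_mul, primedCofactor_mul_invOfUnit, map_one]
  rw [map_prod_xseries_true m o i, map_prod_xseries_false m o i,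
    PowerSeries.X_pow_dvd_mul_sub_iff hinv, ← map_mul] at hrel
  have := PowerSeries.coeff_eq_of_X_pow_dvd_sub hrel (j := j + 1) (by omega)
  rwa [PowerSeries.coeff_map, PowerSeries.coeff_map, xseries, PowerSeries.coeff_mk,
    xvar_true_succ] at this

end GeneratingSeries

theorem statement7_general (m : ℕ) (o : Fin m → ℕ) (i : Fin m) :
    Function.Bijective
        ⇑((Ideal.Quotient.mkₐ ℂ (J7 m o (o i))).comp
          (MvPolynomial.supported ℂ (good7 m o i)).val) ∧
      Nonempty
        (MvPolynomial ↥(good7 m o i) ℂ ≃ₐ[ℂ] (MvPolynomial (V7 m o) ℂ ⧸ J7 m o (o i))) := by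
  have hbij := bijective_mk_comp_supported_val (J7 m o (o i)) (solvePrimed m o i).toRingHom
    (fun _ hp ↦ rename_retractSupported _ hp) (J7_le_ker_solvePrimed m o i) fun v hv ↦ by
      obtain ⟨j, rfl⟩ := exists_eq_inr_of_notMem_good7 m o i hv
      rw [mk_X_eq_mk_rename_coeff_solvedSeries]
      exact ⟨(supportedEquivMvPolynomial _).symm _, rfl⟩
  exact ⟨hbij, ⟨(supportedEquivMvPolynomial _).symm.trans (AlgEquiv.ofBijective _ hbij)⟩⟩

/-- With `k := o i ≤ o l` for all `l`, the composite of the inclusion of the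
polynomial subring of `P` generated by all variables except `x'_{i,1}, …, x'_{i,k}` with the
quotient map `P → T = P/⟨E'_j − E_j : 1 ≤ j ≤ k⟩` is an isomorphism of `ℂ`-algebras;
in particular `T` is a polynomial ring. -/
theorem statement7 (m : ℕ) (hm : 1 ≤ m) (o : Fin m → ℕ) (ho : ∀ l, 1 ≤ o l)
    (i : Fin m) (hmin : ∀ l, o i ≤ o l) :
    Function.Bijective
        ⇑((Ideal.Quotient.mkₐ ℂ (J7 m o (o i))).comp
          (MvPolynomial.supported ℂ (good7 m o i)).val) ∧
      Nonempty
        (MvPolynomial ↥(good7 m o i) ℂ ≃ₐ[ℂ] (MvPolynomial (V7 m o) ℂ ⧸ J7 m o (o i))) :=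
  statement7_general m o i
end
end

section
/- Let k ≥ 1, n ≥ 0, and let X' = {x'_1,…,x'_k}, X = {x_1,…,x_k} and Y = {y_1,…,y_n} be pairwise disjoint sets of indeterminates. In the polynomial ring ℂ[X' ⊔ X ⊔ Y], the ideal generated by {e_j(X' ⊔ Y) − e_j(X ⊔ Y) : 1 ≤ j ≤ k} is equal to the ideal generated by {e_j(X') − e_j(X) : 1 ≤ j ≤ k}. -/
open MvPolynomial

set_option synthInstance.maxHeartbeats 400000
set_option maxHeartbeats 1000000

noncomputable section

/-- The `j`-th elementary symmetric polynomial `e_j(U)` in the set of variables `U`,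
with `e_0(U) = 1` and `e_j(U) = 0` for `j > |U|`. -/
def esymF {V : Type} [DecidableEq V] (U : Finset V) (j : ℕ) : MvPolynomial V ℂ :=
  ∑ t ∈ U.powersetCard j, ∏ v ∈ t, X v

/-- The variable set `X' ⊔ X ⊔ Y`. -/
abbrev V8 (k n : ℕ) : Type := Fin k ⊕ Fin k ⊕ Fin n

/-- The alphabet `X' = {x'_1, …, x'_k}`. -/
def FXp (k n : ℕ) : Finset (V8 k n) := Finset.univ.image Sum.inl

/-- The alphabet `X = {x_1, …, x_k}`. -/
def FX (k n : ℕ) : Finset (V8 k n) :=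
  Finset.univ.image fun a : Fin k => Sum.inr (Sum.inl a)

/-- The alphabet `Y = {y_1, …, y_n}`. -/
def FY (k n : ℕ) : Finset (V8 k n) :=
  Finset.univ.image fun a : Fin n => Sum.inr (Sum.inr a)

/- The convolution formula for `e_j` makes the differences `e_j(X' ⊔ Y) − e_j(X ⊔ Y)` the
convolution of `d_a = e_a(X') − e_a(X)` with `e_b(Y)`. Since `d_0 = 0` and `e_0(Y) = 1`, this
change of generators is unitriangular, hence invertible over any commutative ring. -/

open Finset

section Convolution

variable {R : Type*} [CommRing R] {d c : ℕ → R} {k : ℕ}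

lemma sum_antidiagonal_mul_mem_span (hd : d 0 = 0) {j : ℕ} (hj : j ≤ k) :
    ∑ p ∈ antidiagonal j, d p.1 * c p.2 ∈
      Ideal.span {f | ∃ i : ℕ, 1 ≤ i ∧ i ≤ k ∧ f = d i} := by
  refine Ideal.sum_mem _ fun p hp => ?_
  rcases Nat.eq_zero_or_pos p.1 with h0 | hpos
  · simp [h0, hd]
  · exact Ideal.mul_mem_right _ _
      (Ideal.subset_span ⟨p.1, hpos, (HasAntidiagonal.antidiagonal.fst_le hp).trans hj, rfl⟩)

lemma mem_span_sum_antidiagonal_mul (hd : d 0 = 0) (hc : c 0 = 1) {j : ℕ} (hj : j ≤ k) :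
    d j ∈ Ideal.span {f | ∃ i : ℕ, 1 ≤ i ∧ i ≤ k ∧
      f = ∑ p ∈ antidiagonal i, d p.1 * c p.2} := by
  induction j using Nat.strong_induction_on with
  | _ j ih =>
    rcases j with _ | m
    · simp [hd]
    have hsplit : d (m + 1) = ∑ p ∈ antidiagonal (m + 1), d p.1 * c p.2 -
        ∑ p ∈ antidiagonal m, d p.1 * c (p.2 + 1) := by
      rw [Nat.sum_antidiagonal_succ', hc, mul_one, add_sub_cancel_right]
    rw [hsplit]
    refine sub_mem (Ideal.subset_span ⟨m + 1, m.succ_pos, hj, rfl⟩)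
      (Ideal.sum_mem _ fun p hp => Ideal.mul_mem_right _ _ ?_)
    have hp1 : p.1 ≤ m := HasAntidiagonal.antidiagonal.fst_le hp
    exact ih p.1 (by omega) (by omega)

theorem Ideal.span_sum_antidiagonal_mul_eq (hd : d 0 = 0) (hc : c 0 = 1) :
    Ideal.span {f | ∃ j : ℕ, 1 ≤ j ∧ j ≤ k ∧ f = ∑ p ∈ antidiagonal j, d p.1 * c p.2} =
      Ideal.span {f | ∃ j : ℕ, 1 ≤ j ∧ j ≤ k ∧ f = d j} := by
  apply le_antisymm <;> rw [Ideal.span_le]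
  · rintro f ⟨j, -, hj, rfl⟩
    exact sum_antidiagonal_mul_mem_span hd hj
  · rintro f ⟨j, -, hj, rfl⟩
    exact mem_span_sum_antidiagonal_mul hd hc hj

end Convolution

section ElementarySymmetric

variable {V : Type} [DecidableEq V]

lemma esymF_zero (U : Finset V) : esymF U 0 = 1 := by
  simp [esymF]

lemma esymF_eq_coeff_prod (U : Finset V) (j : ℕ) :
    esymF U j = (∏ v ∈ U, (Polynomial.C (X (R := ℂ) v) * Polynomial.X + 1)).coeff j := by
  have hterm : ∀ t ∈ U.powerset,
      (∏ v ∈ t, Polynomial.C (X (R := ℂ) v) * Polynomial.X) *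
          ∏ _v ∈ U \ t, (1 : Polynomial (MvPolynomial V ℂ)) =
        Polynomial.C (∏ v ∈ t, X v) * Polynomial.X ^ t.card := by
    intro t _
    rw [prod_const_one, mul_one, prod_mul_distrib, prod_const, map_prod]
  rw [prod_add, sum_congr rfl hterm, Polynomial.finsetSum_coeff]
  simp_rw [Polynomial.coeff_C_mul, Polynomial.coeff_X_pow, mul_ite, mul_one, mul_zero]
  rw [esymF, powersetCard_eq_filter, sum_filter]
  exact sum_congr rfl fun t _ => by simp [eq_comm]

lemma esymF_union {U W : Finset V} (h : Disjoint U W) (j : ℕ) :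
    esymF (U ∪ W) j = ∑ p ∈ antidiagonal j, esymF U p.1 * esymF W p.2 := by
  simp_rw [esymF_eq_coeff_prod]
  rw [prod_union h, Polynomial.coeff_mul]

lemma esymF_union_sub_esymF_union {U U' W : Finset V} (hU : Disjoint U W) (hU' : Disjoint U' W)
    (j : ℕ) :
    esymF (U ∪ W) j - esymF (U' ∪ W) j =
      ∑ p ∈ antidiagonal j, (esymF U p.1 - esymF U' p.1) * esymF W p.2 := by
  simp_rw [esymF_union hU, esymF_union hU', sub_mul, sum_sub_distrib]

end ElementarySymmetric

lemma disjoint_FXp_FY (k n : ℕ) : Disjoint (FXp k n) (FY k n) := by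
  simp [disjoint_left, FXp, FY]

lemma disjoint_FX_FY (k n : ℕ) : Disjoint (FX k n) (FY k n) := by
  simp [disjoint_left, FX, FY]

theorem statement8_general (k n : ℕ) :
    Ideal.span {f | ∃ j : ℕ, 1 ≤ j ∧ j ≤ k ∧
        f = esymF (FXp k n ∪ FY k n) j - esymF (FX k n ∪ FY k n) j} =
      Ideal.span {f | ∃ j : ℕ, 1 ≤ j ∧ j ≤ k ∧ f = esymF (FXp k n) j - esymF (FX k n) j} := by
  simp_rw [esymF_union_sub_esymF_union (disjoint_FXp_FY k n) (disjoint_FX_FY k n)]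
  exact Ideal.span_sum_antidiagonal_mul_eq (d := fun j => esymF (FXp k n) j - esymF (FX k n) j)
    (by rw [esymF_zero, esymF_zero, sub_self]) (esymF_zero _)

/-- In `ℂ[X' ⊔ X ⊔ Y]`, the ideal generated by
`{e_j(X' ⊔ Y) − e_j(X ⊔ Y) : 1 ≤ j ≤ k}` equals the ideal generated by
`{e_j(X') − e_j(X) : 1 ≤ j ≤ k}`. -/
theorem statement8 (k n : ℕ) (hk : 1 ≤ k) :
    Ideal.span {f | ∃ j : ℕ, 1 ≤ j ∧ j ≤ k ∧
        f = esymF (FXp k n ∪ FY k n) j - esymF (FX k n ∪ FY k n) j} =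
      Ideal.span {f | ∃ j : ℕ, 1 ≤ j ∧ j ≤ k ∧ f = esymF (FXp k n) j - esymF (FX k n) j} :=
  statement8_general k n

end
end

section
/- Let m ≥ 1 and o(1),…,o(m) ≥ 1, and let R be the subalgebra of the polynomial ring ℂ[x_{l,j} : 1 ≤ l ≤ m, 1 ≤ j ≤ o(l)] consisting of polynomials that are separately symmetric in each alphabet X_l = {x_{l,1},…,x_{l,o(l)}} (i.e., invariant under the product of the symmetric groups permuting the variables within each alphabet). Then in R ⊗_ℂ R the family of elements {e_j(X_l) ⊗ 1 − 1 ⊗ e_j(X_l) : 1 ≤ l ≤ m, 1 ≤ j ≤ o(l)} is a regular sequence and generates the kernel of the multiplication map R ⊗_ℂ R → R. (Hence the Koszul complex of this family is a resolution of R by free R⊗R-modules, and the Hochschild homology of an R-bimodule M can be computed as the homology of M tensored with this Koszul complex.) -/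
open MvPolynomial

set_option synthInstance.maxHeartbeats 400000
set_option maxHeartbeats 1000000

noncomputable section

/-- The index type of the variables: `⟨l, j⟩` is the `j`-th variable of the `l`-th
alphabet `X_l`. -/
abbrev Idx {m : ℕ} (o : Fin m → ℕ) : Type := Σ l : Fin m, Fin (o l)

/-- The permutation of the variables induced by a family of permutations of the
individual alphabets. -/
def permIdx {m : ℕ} (o : Fin m → ℕ) (g : ∀ l, Equiv.Perm (Fin (o l))) : Idx o ≃ Idx o where
  toFun p := ⟨p.1, g p.1 p.2⟩
  invFun p := ⟨p.1, (g p.1).symm p.2⟩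
  left_inv p := by cases p; simp
  right_inv p := by cases p; simp

/-- The subalgebra of polynomials which are separately symmetric in each of the
alphabets `X_l`. -/
def sep {m : ℕ} (o : Fin m → ℕ) : Subalgebra ℂ (MvPolynomial (Idx o) ℂ) :=
  ⨅ g : ∀ l, Equiv.Perm (Fin (o l)),
    AlgHom.equalizer (rename ⇑(permIdx o g)) (AlgHom.id ℂ (MvPolynomial (Idx o) ℂ))

lemma mem_sep {m : ℕ} {o : Fin m → ℕ} {f : MvPolynomial (Idx o) ℂ} :
    f ∈ sep o ↔ ∀ g : ∀ l, Equiv.Perm (Fin (o l)), rename ⇑(permIdx o g) f = f := by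
  simp [sep, Algebra.mem_iInf, AlgHom.mem_equalizer]

/-- The finite set of variables belonging to the union of the alphabets `X_l`, `l ∈ s`. -/
def alphF {m : ℕ} (o : Fin m → ℕ) (s : Finset (Fin m)) : Finset (Idx o) :=
  Finset.univ.filter fun p => p.1 ∈ s

/-- The `j`-th elementary symmetric polynomial of the union of the alphabets `X_l`, `l ∈ s`. -/
def esymPoly {m : ℕ} (o : Fin m → ℕ) (s : Finset (Fin m)) (j : ℕ) :
    MvPolynomial (Idx o) ℂ :=
  ∑ t ∈ (alphF o s).powersetCard j, ∏ v ∈ t, X v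

lemma esymPoly_mem {m : ℕ} (o : Fin m → ℕ) (s : Finset (Fin m)) (j : ℕ) :
    esymPoly o s j ∈ sep o := by
  rw [mem_sep]
  intro g
  unfold esymPoly
  rw [map_sum]
  refine Finset.sum_nbij' (fun t => t.image (permIdx o g))
    (fun t => t.image (permIdx o g).symm) ?_ ?_ ?_ ?_ ?_
  · intro a ha
    rw [Finset.mem_powersetCard] at ha ⊢
    refine ⟨?_, ?_⟩
    · intro v hv
      rcases Finset.mem_image.mp hv with ⟨w, hw, rfl⟩
      have hw' := ha.1 hw
      simp only [alphF, Finset.mem_filter, Finset.mem_univ, true_and] at hw' ⊢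
      exact hw'
    · rw [Finset.card_image_of_injective _ (permIdx o g).injective]
      exact ha.2
  · intro a ha
    rw [Finset.mem_powersetCard] at ha ⊢
    refine ⟨?_, ?_⟩
    · intro v hv
      rcases Finset.mem_image.mp hv with ⟨w, hw, rfl⟩
      have hw' := ha.1 hw
      simp only [alphF, Finset.mem_filter, Finset.mem_univ, true_and] at hw' ⊢
      exact hw'
    · rw [Finset.card_image_of_injective _ (permIdx o g).symm.injective]
      exact ha.2
  · intro a _
    simp [Finset.image_image, Function.comp_def]
  · intro a _
    simp [Finset.image_image, Function.comp_def]
  · intro a _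
    rw [map_prod]
    simp only [rename_X]
    exact (Finset.prod_image fun x _ y _ hxy => (permIdx o g).injective hxy).symm

/-- The `j`-th elementary symmetric polynomial of `⊔_{l ∈ s} X_l` as an element of the
algebra of separately symmetric polynomials. -/
def Esub {m : ℕ} (o : Fin m → ℕ) (s : Finset (Fin m)) (j : ℕ) : sep o :=
  ⟨esymPoly o s j, esymPoly_mem o s j⟩

open scoped TensorProduct

/-- The element `e_j(X_l) ⊗ 1 − 1 ⊗ e_j(X_l)` of `R ⊗_ℂ R`. -/
def HHgen {m : ℕ} (o : Fin m → ℕ) (l : Fin m) (j : ℕ) : (sep o) ⊗[ℂ] (sep o) :=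
  (Esub o {l} j) ⊗ₜ[ℂ] (1 : sep o) - (1 : sep o) ⊗ₜ[ℂ] (Esub o {l} j)

/-- The family `{e_j(X_l) ⊗ 1 − 1 ⊗ e_j(X_l)}` listed as a sequence
(`l` in the outer loop, `j = 1, …, o l` in the inner loop). -/
def HHseq {m : ℕ} (o : Fin m → ℕ) : List ((sep o) ⊗[ℂ] (sep o)) :=
  (List.finRange m).flatMap fun l => (List.range (o l)).map fun j => HHgen o l (j + 1)

/-!
By induction on the number of alphabets, peeling off one alphabet at a time and applying the
fundamental theorem of symmetric polynomials with coefficients in the polynomial ring of the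
remaining alphabets, `R` is the free polynomial algebra on the `e_j(X_l)`. Hence `R ⊗ R` is the
polynomial ring in the `e_j(X_l) ⊗ 1` and `1 ⊗ e_j(X_l)`, and after the triangular change of
variables `(a, b) ↦ (a, a - b)` the elements `e_j(X_l) ⊗ 1 − 1 ⊗ e_j(X_l)` become distinct
variables, which form a regular sequence. The kernel of the multiplication map is generated by
the `s ⊗ 1 − 1 ⊗ s`; as `s ↦ s ⊗ 1` and `s ↦ 1 ⊗ s` are algebra maps that agree modulo our ideal
on the generators `e_j(X_l)`, these all lie in the ideal.
-/

namespace MvPolynomial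

section EsymmSubst

variable (B : Type*) [CommRing B] (n : ℕ)

def esymmSubst : MvPolynomial (Fin n) B →ₐ[B] MvPolynomial (Fin n) B :=
  aeval fun i => esymm (Fin n) B (i + 1)

variable {B n}

lemma esymmSubst_eq_val (r : MvPolynomial (Fin n) B) :
    esymmSubst B n r = (esymmAlgHom (Fin n) B n r).val :=
  (esymmAlgHom_apply r).symm

lemma esymmSubst_injective : Function.Injective (esymmSubst B n) := by
  intro r s h
  rw [esymmSubst_eq_val, esymmSubst_eq_val] at h
  exact esymmAlgHom_injective B (Fintype.card_fin n).ge (Subtype.ext h)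

lemma range_esymmSubst : Set.range (esymmSubst B n) = {Q | Q.IsSymmetric} := by
  ext Q
  constructor
  · rintro ⟨r, rfl⟩
    rw [esymmSubst_eq_val]
    exact (esymmAlgHom (Fin n) B n r).2
  · intro hQ
    obtain ⟨r, hr⟩ := esymmAlgHom_surjective B (Fintype.card_fin n).le ⟨Q, hQ⟩
    exact ⟨r, by rw [esymmSubst_eq_val, hr]⟩

lemma map_esymmSubst {B' : Type*} [CommRing B'] (f : B →+* B') (r : MvPolynomial (Fin n) B) :
    map f (esymmSubst B n r) = esymmSubst B' n (map f r) := by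
  induction r using MvPolynomial.induction_on with
  | C b => simp [esymmSubst]
  | add p q hp hq => simp only [map_add, hp, hq]
  | mul_X p i hp => rw [map_mul, map_mul, hp]; simp [esymmSubst, map_esymm]

end EsymmSubst

variable (σ R : Type*) [CommRing R]

def subShear : MvPolynomial (σ ⊕ σ) R ≃ₐ[R] MvPolynomial (σ ⊕ σ) R :=
  have h : (aeval (Sum.elim (fun i => X (Sum.inl i)) fun i => X (Sum.inl i) - X (Sum.inr i))).comp
      (aeval (Sum.elim (fun i => X (Sum.inl i)) fun i => X (Sum.inl i) - X (Sum.inr i))) =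
        AlgHom.id R (MvPolynomial (σ ⊕ σ) R) := by
    apply algHom_ext; rintro (i | i) <;> simp
  AlgEquiv.ofAlgHom _ _ h h

variable {σ R}

lemma subShear_X_sub (i : σ) :
    subShear σ R (X (Sum.inl i) - X (Sum.inr i)) = X (Sum.inr i) := by
  simp [subShear]

lemma X_mem_nonZeroDivisors_quotient_span_X_image {s : Set σ} {i : σ} (hi : i ∉ s) :
    Ideal.Quotient.mk (Ideal.span (X '' s)) (X i : MvPolynomial σ R) ∈ nonZeroDivisors _ := by
  rw [mem_nonZeroDivisors_iff_right]
  intro z hz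
  obtain ⟨p, rfl⟩ := Ideal.Quotient.mk_surjective z
  rw [← map_mul, Ideal.Quotient.eq_zero_iff_mem, mem_ideal_span_X_image] at hz
  rw [Ideal.Quotient.eq_zero_iff_mem, mem_ideal_span_X_image]
  intro d hd
  obtain ⟨j, hj, hdj⟩ := hz (d + Finsupp.single i 1) (by
    rw [support_mul_X]; exact Finset.mem_map_of_mem _ hd)
  refine ⟨j, hj, ?_⟩
  rwa [Finsupp.add_apply, Finsupp.single_eq_of_ne (by rintro rfl; exact hi hj), add_zero] at hdj

end MvPolynomial

section RegularList

variable {A B : Type*} [CommRing A] [CommRing B]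

/-- `RingTheory.Sequence.IsWeaklyRegular A L`, phrased with quotient rings. -/
def IsWeaklyRegularList (L : List A) : Prop :=
  ∀ (t : ℕ) (ht : t < L.length),
    Ideal.Quotient.mk (Ideal.span {x | x ∈ L.take t}) (L.get ⟨t, ht⟩) ∈
      nonZeroDivisors (A ⧸ Ideal.span {x | x ∈ L.take t})

lemma IsWeaklyRegularList.map (e : A ≃+* B) {L : List A} (h : IsWeaklyRegularList L) :
    IsWeaklyRegularList (L.map e) := by
  intro t ht
  rw [List.length_map] at ht
  have hspan : Ideal.span {x | x ∈ (L.map e).take t} =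
      (Ideal.span {x | x ∈ L.take t}).map (e : A →+* B) := by
    rw [Ideal.map_span]
    congr 1
    ext; simp [← List.map_take]
  have hx := Submonoid.mem_map_of_mem (Ideal.quotientEquiv _ _ e hspan) (h t ht)
  rw [MulEquivClass.map_nonZeroDivisors, Ideal.quotientEquiv_mk] at hx
  simpa using hx

lemma List.Nodup.getElem_notMem_take {α : Type*} {L : List α} (hL : L.Nodup) {t : ℕ}
    (ht : t < L.length) : L[t] ∉ L.take t := fun hmem =>
  List.disjoint_take_drop hL le_rfl hmem
    (by rw [List.drop_eq_getElem_cons ht]; exact List.mem_cons_self)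

lemma MvPolynomial.isWeaklyRegularList_map_X {σ R : Type*} [CommRing R] {L : List σ}
    (hL : L.Nodup) : IsWeaklyRegularList (L.map (X : σ → MvPolynomial σ R)) := by
  intro t ht
  rw [List.length_map] at ht
  have key : ∀ I : Ideal (MvPolynomial σ R), I = Ideal.span (X '' {i | i ∈ L.take t}) →
      Ideal.Quotient.mk I (X L[t]) ∈ nonZeroDivisors (MvPolynomial σ R ⧸ I) := by
    rintro I rfl
    exact X_mem_nonZeroDivisors_quotient_span_X_image (hL.getElem_notMem_take ht)
  simp only [List.get_eq_getElem, List.getElem_map]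
  exact key _ (by congr 1; ext; simp [← List.map_take])

end RegularList

namespace SepSymm

variable {m : ℕ} (A : Type*) [CommRing A]

def IsSepSymmetric (o : Fin m → ℕ) (p : MvPolynomial (Idx o) A) : Prop :=
  ∀ g, rename (permIdx o g) p = p

def sepEsymm (o : Fin m → ℕ) : MvPolynomial (Idx o) A →ₐ[A] MvPolynomial (Idx o) A :=
  aeval fun p => rename (Sigma.mk p.1) (esymm (Fin (o p.1)) A (p.2 + 1))

lemma permIdx_one (o : Fin m → ℕ) : permIdx o (fun _ => 1) = Equiv.refl _ :=
  Equiv.ext fun _ => rfl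

section Peel

variable (o : Fin (m + 1) → ℕ)

def peelIdx : Idx o ≃ Fin (o 0) ⊕ Idx fun l : Fin m => o l.succ where
  toFun p := Fin.cases (motive := fun l => Fin (o l) → Fin (o 0) ⊕ Idx fun l : Fin m => o l.succ)
    Sum.inl (fun l j => Sum.inr ⟨l, j⟩) p.1 p.2
  invFun := Sum.elim (fun j => ⟨0, j⟩) (fun q => ⟨q.1.succ, q.2⟩)
  left_inv p := by rcases p with ⟨l, j⟩; induction l using Fin.cases <;> rfl
  right_inv q := by rcases q with j | ⟨l, j⟩ <;> rfl

def peelEquiv : MvPolynomial (Idx o) A ≃ₐ[A]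
    MvPolynomial (Fin (o 0)) (MvPolynomial (Idx fun l : Fin m => o l.succ) A) :=
  (renameEquiv A (peelIdx o)).trans (sumAlgEquiv A _ _)

variable {A o}

@[simp]
lemma peelEquiv_C (a : A) : peelEquiv A o (C a) = C (C a) :=
  (peelEquiv A o).commutes a

@[simp]
lemma peelEquiv_X_zero (j : Fin (o 0)) : peelEquiv A o (X ⟨0, j⟩) = X j := by
  simp [peelEquiv, peelIdx]

@[simp]
lemma peelEquiv_X_succ (l : Fin m) (j : Fin (o l.succ)) :
    peelEquiv A o (X ⟨l.succ, j⟩) = C (X ⟨l, j⟩) := by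
  simp [peelEquiv, peelIdx]

lemma peelEquiv_rename_zero (f : MvPolynomial (Fin (o 0)) A) :
    peelEquiv A o (rename (Sigma.mk 0) f) = map C f := by
  induction f using MvPolynomial.induction_on with
  | C a => simp
  | add p q hp hq => simp only [map_add, hp, hq]
  | mul_X p i hp => simp [hp]

lemma peelEquiv_rename_succ (l : Fin m) (f : MvPolynomial (Fin (o l.succ)) A) :
    peelEquiv A o (rename (Sigma.mk l.succ) f) =
      C (rename (Sigma.mk (β := fun l : Fin m => Fin (o l.succ)) l) f) := by
  induction f using MvPolynomial.induction_on with
  | C a => simp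
  | add p q hp hq => simp only [map_add, hp, hq]
  | mul_X p i hp => simp [hp]

lemma peelEquiv_sepEsymm (q : MvPolynomial (Idx o) A) :
    peelEquiv A o (sepEsymm A o q) = esymmSubst _ (o 0)
      (map (sepEsymm A fun l : Fin m => o l.succ).toRingHom (peelEquiv A o q)) := by
  induction q using MvPolynomial.induction_on with
  | C a => simp [esymmSubst]
  | add p q hp hq => simp only [map_add, hp, hq]
  | mul_X q p hq =>
    simp only [map_mul, hq]
    congr 1
    rcases p with ⟨l, j⟩
    induction l using Fin.cases with
    | zero => simp [sepEsymm, esymmSubst, peelEquiv_rename_zero, map_esymm]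
    | succ l => simp [sepEsymm, esymmSubst, peelEquiv_rename_succ]

lemma peelEquiv_rename_permIdx (g : ∀ l, Equiv.Perm (Fin (o l))) (p : MvPolynomial (Idx o) A) :
    peelEquiv A o (rename (permIdx o g) p) = rename (g 0)
      (map (rename (R := A) (permIdx (fun l : Fin m => o l.succ) (fun l => g l.succ))).toRingHom
        (peelEquiv A o p)) := by
  induction p using MvPolynomial.induction_on with
  | C a => simp
  | add p q hp hq => simp only [map_add, hp, hq]
  | mul_X q p hq =>
    simp only [map_mul, hq]
    congr 1
    rcases p with ⟨l, j⟩
    induction l using Fin.cases with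
    | zero => simp [permIdx]
    | succ l => simp [permIdx]

lemma isSepSymmetric_iff_peel (p : MvPolynomial (Idx o) A) :
    IsSepSymmetric A o p ↔ (peelEquiv A o p).IsSymmetric ∧
      ∀ d, IsSepSymmetric A (fun l : Fin m => o l.succ) ((peelEquiv A o p).coeff d) := by
  constructor
  · intro hp
    refine ⟨fun e => ?_, fun d g => ?_⟩
    · have h := peelEquiv_rename_permIdx (Fin.cons e fun _ => 1) p
      rw [hp] at h
      simp only [Fin.cons_zero, Fin.cons_succ, permIdx_one, Equiv.coe_refl, rename_id,
        AlgHom.toRingHom_eq_coe, AlgHom.id_toRingHom, map_id] at h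
      exact h.symm
    · have h := congrArg (coeff d) (peelEquiv_rename_permIdx (Fin.cons 1 g) p)
      rw [hp] at h
      simp only [Fin.cons_zero, Fin.cons_succ, Equiv.Perm.coe_one, rename_id,
        AlgHom.id_apply, coeff_map, AlgHom.toRingHom_eq_coe, RingHom.coe_coe] at h
      exact h.symm
  · rintro ⟨hsymm, hcoeff⟩ g
    apply (peelEquiv A o).injective
    have hmap : map (rename (R := A)
        (permIdx (fun l : Fin m => o l.succ) (fun l => g l.succ))).toRingHom
        (peelEquiv A o p) = peelEquiv A o p :=
      MvPolynomial.ext _ _ fun d => by rw [coeff_map]; exact hcoeff d _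
    rw [peelEquiv_rename_permIdx, hmap, hsymm]

lemma sepEsymm_injective_of_tail
    (h : Function.Injective (sepEsymm A fun l : Fin m => o l.succ)) :
    Function.Injective (sepEsymm A o) := by
  intro q q' hq
  apply (peelEquiv A o).injective
  apply map_injective _ h
  apply esymmSubst_injective
  rw [← peelEquiv_sepEsymm, ← peelEquiv_sepEsymm, hq]

lemma range_sepEsymm_of_tail
    (hinj : Function.Injective (sepEsymm A fun l : Fin m => o l.succ))
    (hrange : Set.range (sepEsymm A fun l : Fin m => o l.succ) =
      {p | IsSepSymmetric A (fun l : Fin m => o l.succ) p}) :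
    Set.range (sepEsymm A o) = {p | IsSepSymmetric A o p} := by
  ext p
  rw [Set.mem_ofPred_eq, isSepSymmetric_iff_peel]
  constructor
  · rintro ⟨q, rfl⟩
    rw [peelEquiv_sepEsymm]
    refine ⟨range_esymmSubst.subset (Set.mem_range_self _), fun d => ?_⟩
    rw [← map_esymmSubst, coeff_map]
    exact hrange.subset (Set.mem_range_self _)
  · rintro ⟨hsymm, hcoeff⟩
    obtain ⟨Q, hQ⟩ : peelEquiv A o p ∈
        Set.range (map (sepEsymm A fun l : Fin m => o l.succ).toRingHom) := by
      rw [mem_range_map_iff_coeffs_subset]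
      intro c hc
      obtain ⟨d, -, rfl⟩ := mem_coeffs_iff.mp hc
      exact hrange.superset (hcoeff d)
    have hQsymm : Q.IsSymmetric := fun e =>
      map_injective _ hinj (by rw [map_rename, hQ, hsymm e])
    obtain ⟨r, rfl⟩ := range_esymmSubst.superset hQsymm
    refine ⟨(peelEquiv A o).symm r, (peelEquiv A o).injective ?_⟩
    rw [peelEquiv_sepEsymm, AlgEquiv.apply_symm_apply, ← map_esymmSubst, hQ]

end Peel

variable {A}

theorem sepEsymm_injective_and_range : ∀ {m : ℕ} (o : Fin m → ℕ),
    Function.Injective (sepEsymm A o) ∧ Set.range (sepEsymm A o) = {p | IsSepSymmetric A o p}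
  | 0, o => by
    have h : sepEsymm A o = AlgHom.id A _ := algHom_ext fun p => p.1.elim0
    refine ⟨h ▸ Function.injective_id, ?_⟩
    rw [h, AlgHom.coe_id, Set.range_id]
    refine (Set.eq_univ_of_forall fun p g => ?_).symm
    rw [Subsingleton.elim (permIdx o g) (Equiv.refl _), Equiv.coe_refl, rename_id,
      AlgHom.id_apply]
  | m + 1, o =>
    have ih := sepEsymm_injective_and_range (fun l : Fin m => o l.succ)
    ⟨sepEsymm_injective_of_tail ih.1, range_sepEsymm_of_tail ih.1 ih.2⟩

variable (o : Fin m → ℕ)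

lemma sepEsymm_X (p : Idx o) : sepEsymm ℂ o (X p) = esymPoly o {p.1} (p.2 + 1) := by
  have halph : alphF o {p.1} = Finset.univ.map ⟨Sigma.mk p.1, sigma_mk_injective⟩ := by
    ext ⟨l, j⟩
    simp only [alphF, Finset.mem_filter, Finset.mem_univ, true_and, Finset.mem_singleton,
      Finset.mem_map, Function.Embedding.coeFn_mk]
    constructor
    · rintro rfl; exact ⟨j, rfl⟩
    · rintro ⟨j, h⟩; exact (congrArg Sigma.fst h).symm
  rw [sepEsymm, aeval_X, esymm, esymPoly, halph, Finset.powersetCard_map, Finset.sum_map, map_sum]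
  simp [Finset.prod_map]

def sepEquiv : MvPolynomial (Idx o) ℂ ≃ₐ[ℂ] sep o :=
  AlgEquiv.ofBijective
    ((sepEsymm ℂ o).codRestrict (sep o) fun q =>
      mem_sep.mpr ((sepEsymm_injective_and_range o).2.subset (Set.mem_range_self q)))
    ⟨fun q q' h => (sepEsymm_injective_and_range o).1 (congrArg Subtype.val h),
      fun ⟨p, hp⟩ => by
        obtain ⟨q, hq⟩ := (sepEsymm_injective_and_range o).2.superset (mem_sep.mp hp)
        exact ⟨q, Subtype.ext hq⟩⟩

lemma sepEquiv_X (p : Idx o) : sepEquiv o (X p) = Esub o {p.1} (p.2 + 1) :=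
  Subtype.ext (sepEsymm_X o p)

def tensorSelfEquiv : sep o ⊗[ℂ] sep o ≃ₐ[ℂ] MvPolynomial (Idx o ⊕ Idx o) ℂ :=
  (Algebra.TensorProduct.congr (sepEquiv o) (sepEquiv o)).symm.trans
    ((tensorEquivSum ℂ (Idx o) (Idx o) ℂ).trans (subShear (Idx o) ℂ))

lemma tensorSelfEquiv_HHgen (p : Idx o) :
    tensorSelfEquiv o (HHgen o p.1 (p.2 + 1)) = X (Sum.inr p) := by
  have h : HHgen o p.1 (p.2 + 1) = Algebra.TensorProduct.congr (sepEquiv o) (sepEquiv o)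
      (X p ⊗ₜ 1 - 1 ⊗ₜ X p) := by
    simp [HHgen, sepEquiv_X]
  rw [tensorSelfEquiv, h]
  simp [subShear_X_sub]

lemma HHseq_eq_map :
    HHseq o = ((List.finRange m).sigma fun l => List.finRange (o l)).map
      fun p => HHgen o p.1 (p.2 + 1) := by
  rw [HHseq, List.sigma, List.map_flatMap]
  congr 1
  funext l
  rw [List.map_map, ← List.map_coe_finRange_eq_range, List.map_map]
  rfl

lemma isWeaklyRegularList_HHseq : IsWeaklyRegularList (HHseq o) := by
  have hL := (List.nodup_finRange m).sigma fun l => List.nodup_finRange (o l)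
  have h : HHseq o = ((((List.finRange m).sigma fun l => List.finRange (o l)).map Sum.inr).map
      X).map (tensorSelfEquiv o).symm := by
    rw [HHseq_eq_map, List.map_map, List.map_map]
    congr 1
    funext p
    simp [AlgEquiv.eq_symm_apply, tensorSelfEquiv_HHgen]
  rw [h]
  exact (isWeaklyRegularList_map_X (R := ℂ) (hL.map Sum.inr_injective)).map
    (B := sep o ⊗[ℂ] sep o) (tensorSelfEquiv o).symm.toRingEquiv

lemma span_HHgen_eq_ker_lmul' :
    Ideal.span {x | ∃ l : Fin m, ∃ j : ℕ, 1 ≤ j ∧ j ≤ o l ∧ x = HHgen o l j} =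
      RingHom.ker (Algebra.TensorProduct.lmul' ℂ (S := sep o)) := by
  set J := Ideal.span {x | ∃ l : Fin m, ∃ j : ℕ, 1 ≤ j ∧ j ≤ o l ∧ x = HHgen o l j}
  apply le_antisymm
  · rw [Ideal.span_le]
    rintro _ ⟨l, j, -, -, rfl⟩
    simp [HHgen]
  · have h : (Ideal.Quotient.mkₐ ℂ (A := sep o ⊗[ℂ] sep o) J).comp
        ((Algebra.TensorProduct.includeRight : sep o →ₐ[ℂ] sep o ⊗[ℂ] sep o).comp
          (sepEquiv o).toAlgHom) =
        (Ideal.Quotient.mkₐ ℂ (A := sep o ⊗[ℂ] sep o) J).comp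
          ((Algebra.TensorProduct.includeLeft : sep o →ₐ[ℂ] sep o ⊗[ℂ] sep o).comp
            (sepEquiv o).toAlgHom) := by
      refine algHom_ext fun p => ?_
      simp only [AlgHom.comp_apply, Ideal.Quotient.mkₐ_eq_mk, Ideal.Quotient.eq]
      rw [sub_mem_comm_iff]
      exact Ideal.subset_span ⟨p.1, p.2 + 1, le_add_self, p.2.isLt, by simp [HHgen, sepEquiv_X]⟩
    show KaehlerDifferential.ideal ℂ (sep o) ≤ J
    rw [← KaehlerDifferential.span_range_eq_ideal, Ideal.span_le]
    rintro _ ⟨s, rfl⟩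
    obtain ⟨q, rfl⟩ := (sepEquiv o).surjective s
    simpa [Ideal.Quotient.eq] using DFunLike.congr_fun h q

end SepSymm

theorem statement11_general (m : ℕ) (o : Fin m → ℕ) :
    (∀ (t : ℕ) (ht : t < (HHseq o).length),
        Ideal.Quotient.mk (Ideal.span {x | x ∈ (HHseq o).take t}) ((HHseq o).get ⟨t, ht⟩) ∈
          nonZeroDivisors
            (@HasQuotient.Quotient _ _ (@Ideal.instHasQuotient _ Algebra.TensorProduct.instRing)
              (Ideal.span {x | x ∈ (HHseq o).take t}))) ∧
      Ideal.span {x | ∃ l : Fin m, ∃ j : ℕ, 1 ≤ j ∧ j ≤ o l ∧ x = HHgen o l j} =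
        RingHom.ker (Algebra.TensorProduct.lmul' ℂ (S := sep o)) :=
  ⟨SepSymm.isWeaklyRegularList_HHseq o, SepSymm.span_HHgen_eq_ker_lmul' o⟩

/-- In `R ⊗_ℂ R`, where `R` is the algebra of separately symmetric
polynomials, the family `{e_j(X_l) ⊗ 1 − 1 ⊗ e_j(X_l) : 1 ≤ l ≤ m, 1 ≤ j ≤ o l}` is a
regular sequence (each term is a non-zero-divisor in the quotient by its predecessors) and
generates the kernel of the multiplication map `R ⊗_ℂ R → R`. -/
theorem statement11 (m : ℕ) (hm : 1 ≤ m) (o : Fin m → ℕ) (ho : ∀ l, 1 ≤ o l) :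
    (∀ (t : ℕ) (ht : t < (HHseq o).length),
        Ideal.Quotient.mk (Ideal.span {x | x ∈ (HHseq o).take t}) ((HHseq o).get ⟨t, ht⟩) ∈
          nonZeroDivisors
            (@HasQuotient.Quotient _ _ (@Ideal.instHasQuotient _ Algebra.TensorProduct.instRing)
              (Ideal.span {x | x ∈ (HHseq o).take t}))) ∧
      Ideal.span {x | ∃ l : Fin m, ∃ j : ℕ, 1 ≤ j ∧ j ≤ o l ∧ x = HHgen o l j} =
        RingHom.ker (Algebra.TensorProduct.lmul' ℂ (S := sep o)) :=
  statement11_general m o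
end
end

section
/- Let X', X_1, X_2 be pairwise disjoint finite sets of indeterminates with |X'| = |X_1| + |X_2|. Let R be the subalgebra of the polynomial ring ℂ[X' ⊔ X_1 ⊔ X_2] of polynomials separately symmetric in each of the three alphabets. Then: (i) the sequence e_1(X') − e_1(X_1 ⊔ X_2), e_2(X') − e_2(X_1 ⊔ X_2), …, e_{|X'|}(X') − e_{|X'|}(X_1 ⊔ X_2) is a regular sequence in R; and (ii) writing I for the ideal of R it generates, the composite of the inclusion of the subalgebra of R consisting of polynomials in the variables of X_1 ⊔ X_2 only (separately symmetric in X_1 and in X_2) with the quotient map R → R/I is an isomorphism of ℂ-algebras. (This is the key step showing that the positive homology of the Koszul matrix factorization associated to a merge/split web vertex is concentrated in homological degree zero and is isomorphic to the decoration bimodule of the web.) -/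
open MvPolynomial

set_option synthInstance.maxHeartbeats 400000
set_option maxHeartbeats 1000000

noncomputable section

/-- The sequence `e_1(X')−e_1(X_1⊔X_2), …, e_{|X'|}(X')−e_{|X'|}(X_1⊔X_2)` in `R`.
The alphabets are numbered `0 ↦ X'`, `1 ↦ X_1`, `2 ↦ X_2`. -/
def seq13 (o : Fin 3 → ℕ) : List (sep o) :=
  (List.range (o 0)).map fun a => Esub o {0} (a + 1) - Esub o {1, 2} (a + 1)

/-- The subalgebra of `R` consisting of polynomials in the variables of `X_1 ⊔ X_2` only
(separately symmetric in `X_1` and in `X_2`). -/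
def T13 (o : Fin 3 → ℕ) : Subalgebra ℂ (sep o) :=
  (MvPolynomial.supported ℂ {v : Idx o | v.1 ≠ 0}).comap (sep o).val


/-! By the fundamental theorem of symmetric polynomials, applied alphabet by alphabet in the nested
polynomial ring `ℂ[X_2][X_1][X']`, `R` is the polynomial algebra on the `e_a(X')`, `e_b(X_1)`,
`e_c(X_2)`. Each `e_a(X_1 ⊔ X_2)` is a polynomial in the `e_b(X_1)`, `e_c(X_2)` alone, so
`e_a(X') ↦ e_a(X') - e_a(X_1 ⊔ X_2)` is a triangular change of coordinates, after which the
sequence consists of variables. The quotient by the first `t` variables is a polynomial ring, a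
domain in which the next variable is nonzero; and killing all the variables of the first
alphabet identifies the quotient with the polynomials in the remaining ones, which correspond to
the separately symmetric polynomials in `X_1 ⊔ X_2`. -/

section EsymmMap

variable {R S : Type*} [CommRing R] [CommRing S] (n : ℕ)

def esymmMap (f : R →+* S) : MvPolynomial (Fin n) R →+* MvPolynomial (Fin n) S :=
  (map f).comp (aeval fun i : Fin n => esymm (Fin n) R (i + 1)).toRingHom

lemma esymmMap_C (f : R →+* S) (r : R) : esymmMap n f (C r) = C (f r) := by
  simp [esymmMap]

lemma esymmMap_X (f : R →+* S) (i : Fin n) : esymmMap n f (X i) = esymm (Fin n) S (i + 1) := by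
  simp [esymmMap, map_esymm]

lemma esymmMap_injective {f : R →+* S} (hf : Function.Injective f) :
    Function.Injective (esymmMap n f) := by
  refine (map_injective f hf).comp fun a b hab => esymmAlgHom_fin_injective R le_rfl ?_
  exact Subtype.ext (by simpa [esymmAlgHom_apply] using hab)

def liftAction {ι : Type*} (φ : ι → S →+* S) (x : Equiv.Perm (Fin n) × ι) :
    MvPolynomial (Fin n) S →+* MvPolynomial (Fin n) S :=
  (rename ⇑x.1).toRingHom.comp (map (φ x.2))

lemma liftAction_one {ι : Type*} {φ : ι → S →+* S} {i₀ : ι} (hi₀ : φ i₀ = RingHom.id S) :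
    liftAction n φ (1, i₀) = RingHom.id _ :=
  RingHom.ext fun p => by simp [liftAction, hi₀, MvPolynomial.map_id]

/-- The fundamental theorem of symmetric polynomials with coefficients restricted to `range f`;
in this form it can be iterated over several alphabets. -/
lemma mem_range_esymmMap_iff {f : R →+* S} (hf : Function.Injective f) {ι : Type*}
    (φ : ι → S →+* S) {i₀ : ι} (hi₀ : φ i₀ = RingHom.id S)
    (hφ : ∀ s, s ∈ Set.range f ↔ ∀ i, φ i s = s) (p : MvPolynomial (Fin n) S) :
    p ∈ Set.range (esymmMap n f) ↔ ∀ x, liftAction n φ x p = p := by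
  constructor
  · rintro ⟨q, rfl⟩ ⟨e, i⟩
    have hfix : (φ i).comp f = f := RingHom.ext fun r => (hφ (f r)).1 ⟨r, rfl⟩ i
    have hsymm := (esymmAlgHom (Fin n) R n q).2 e
    rw [esymmAlgHom_apply] at hsymm
    simp only [liftAction, esymmMap, RingHom.comp_apply, AlgHom.toRingHom_eq_coe,
      RingHom.coe_coe, map_map, hfix, ← map_rename, hsymm]
  · intro h
    have hcoeff : ∀ m, coeff m p ∈ Set.range f := fun m =>
      (hφ _).2 fun i => by simpa [liftAction, coeff_map] using congr_arg (coeff m) (h (1, i))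
    obtain ⟨r, rfl⟩ : p ∈ Set.range (map f) := by
      refine mem_range_map_iff_coeffs_subset.2 fun c hc => ?_
      obtain ⟨m, -, rfl⟩ := mem_coeffs_iff.1 hc
      exact hcoeff m
    have hr : r.IsSymmetric := fun e => map_injective f hf <| by
      simpa [liftAction, hi₀, MvPolynomial.map_id, map_rename] using h (e, i₀)
    obtain ⟨q, hq⟩ := (esymmAlgHom_fin_bijective R n).2 ⟨r, hr⟩
    have hq' := congr_arg Subtype.val hq
    rw [esymmAlgHom_apply] at hq'
    exact ⟨q, by rw [esymmMap, RingHom.comp_apply, AlgHom.toRingHom_eq_coe, RingHom.coe_coe, hq']⟩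

end EsymmMap

section KillVars

variable {σ R : Type*} [CommRing R]

lemma eq_self_of_mem_supported {s : Set σ} (F : MvPolynomial σ R →ₐ[R] MvPolynomial σ R)
    (hF : ∀ v ∈ s, F (X v) = X v) {p : MvPolynomial σ R} (hp : p ∈ supported R s) : F p = p := by
  have : supported R s ≤ AlgHom.equalizer F (AlgHom.id R _) :=
    Algebra.adjoin_le fun _ ⟨v, hv, hX⟩ => hX ▸ hF v hv
  exact this hp

variable (s : Set σ)

open Classical in
def killVars : MvPolynomial σ R →ₐ[R] MvPolynomial σ R :=
  aeval fun v => if v ∈ s then 0 else X v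

variable {s}

lemma killVars_X_of_mem {v : σ} (hv : v ∈ s) : killVars (R := R) s (X v) = 0 := by
  simp [killVars, hv]

lemma killVars_X_of_notMem {v : σ} (hv : v ∉ s) : killVars (R := R) s (X v) = X v := by
  simp [killVars, hv]

lemma killVars_mem_supported (p : MvPolynomial σ R) : killVars s p ∈ supported R sᶜ := by
  induction p using MvPolynomial.induction_on with
  | C r => rw [algHom_C]; exact Subalgebra.algebraMap_mem _ r
  | add p q hp hq => rw [map_add]; exact add_mem hp hq
  | mul_X p v hp =>
    rw [map_mul]
    refine mul_mem hp ?_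
    by_cases hv : v ∈ s
    · rw [killVars_X_of_mem hv]; exact zero_mem _
    · rw [killVars_X_of_notMem hv]; exact Algebra.subset_adjoin ⟨v, hv, rfl⟩

lemma mem_supported_compl_iff_killVars_eq_self {p : MvPolynomial σ R} :
    p ∈ supported R sᶜ ↔ killVars s p = p :=
  ⟨eq_self_of_mem_supported _ fun _ hv => killVars_X_of_notMem hv,
    fun h => h ▸ killVars_mem_supported p⟩

lemma mk_killVars (p : MvPolynomial σ R) :
    Ideal.Quotient.mk (Ideal.span (X '' s)) (killVars s p) = Ideal.Quotient.mk _ p := by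
  have : (Ideal.Quotient.mkₐ R (Ideal.span (X '' s))).comp (killVars s) =
      Ideal.Quotient.mkₐ R _ := by
    refine algHom_ext fun v => ?_
    by_cases hv : v ∈ s
    · rw [AlgHom.comp_apply, killVars_X_of_mem hv, map_zero, eq_comm, Ideal.Quotient.mkₐ_eq_mk,
        Ideal.Quotient.eq_zero_iff_mem]
      exact Ideal.subset_span ⟨v, hv, rfl⟩
    · rw [AlgHom.comp_apply, killVars_X_of_notMem hv]
  exact congr($this p)

lemma sub_killVars_mem_span_X_image (p : MvPolynomial σ R) :
    p - killVars s p ∈ Ideal.span (X '' s) :=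
  Ideal.Quotient.eq.1 (mk_killVars p).symm

lemma span_X_image_eq_ker_killVars :
    Ideal.span (X '' s) = RingHom.ker (killVars (R := R) s) := by
  refine le_antisymm (Ideal.span_le.2 ?_) fun p hp => ?_
  · rintro _ ⟨v, hv, rfl⟩
    exact killVars_X_of_mem hv
  · simpa [show killVars (R := R) s p = 0 from hp] using sub_killVars_mem_span_X_image (s := s) p

lemma eq_zero_of_mem_supported_compl_of_mem_span {p : MvPolynomial σ R}
    (hp : p ∈ supported R sᶜ) (hJ : p ∈ Ideal.span (X '' s)) : p = 0 := by
  rw [← mem_supported_compl_iff_killVars_eq_self.1 hp]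
  rwa [span_X_image_eq_ker_killVars] at hJ

instance isPrime_span_X_image [IsDomain R] :
    (Ideal.span (X '' s : Set (MvPolynomial σ R))).IsPrime := by
  rw [span_X_image_eq_ker_killVars]
  exact RingHom.ker_isPrime _

lemma X_mem_span_X_image_iff [Nontrivial R] {v : σ} :
    (X v : MvPolynomial σ R) ∈ Ideal.span (X '' s) ↔ v ∈ s := by
  refine ⟨fun h => by_contra fun hv => X_ne_zero (R := R) v ?_,
    fun hv => Ideal.subset_span ⟨v, hv, rfl⟩⟩
  rwa [span_X_image_eq_ker_killVars, RingHom.mem_ker, killVars_X_of_notMem hv] at h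

end KillVars

lemma bijective_quotient_mkₐ_comp_val {R A : Type*} [CommRing R] [CommRing A] [Algebra R A]
    (T : Subalgebra R A) (I : Ideal A) (hdisj : ∀ t ∈ T, t ∈ I → t = 0)
    (hcover : ∀ a, ∃ t ∈ T, a - t ∈ I) :
    Function.Bijective ((Ideal.Quotient.mkₐ R I).comp T.val) := by
  refine ⟨(injective_iff_map_eq_zero _).2 fun t ht => Subtype.ext ?_, fun y => ?_⟩
  · exact hdisj t t.2 (Ideal.Quotient.eq_zero_iff_mem.1 ht)
  · obtain ⟨a, rfl⟩ := Ideal.Quotient.mk_surjective y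
    obtain ⟨t, ht, hat⟩ := hcover a
    exact ⟨⟨t, ht⟩, (Ideal.Quotient.eq.2 hat).symm⟩

section Shear

variable {σ R : Type*} [CommRing R]

def shear (q : σ → MvPolynomial σ R) : MvPolynomial σ R →ₐ[R] MvPolynomial σ R :=
  aeval fun v => X v + q v

lemma shear_X (q : σ → MvPolynomial σ R) (v : σ) : shear q (X v) = X v + q v :=
  aeval_X _ _

lemma shear_eq_self_of_mem_supported {q : σ → MvPolynomial σ R} {s : Set σ}
    (hs : ∀ v ∈ s, q v = 0) {p : MvPolynomial σ R} (hp : p ∈ supported R s) : shear q p = p :=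
  eq_self_of_mem_supported _ (fun v hv => by rw [shear_X, hs v hv, add_zero]) hp

lemma shear_comp_shear_neg {q : σ → MvPolynomial σ R}
    (hq : ∀ v, q v ∈ supported R {w | q w = 0}) : (shear q).comp (shear (-q)) = AlgHom.id R _ :=
  algHom_ext fun v => by
    rw [AlgHom.comp_apply, shear_X, map_add, shear_X, Pi.neg_apply,
      shear_eq_self_of_mem_supported (fun _ hw => hw) (neg_mem (hq v)), add_neg_cancel_right,
      AlgHom.id_apply]

def shearEquiv (q : σ → MvPolynomial σ R) (hq : ∀ v, q v ∈ supported R {w | q w = 0}) :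
    MvPolynomial σ R ≃ₐ[R] MvPolynomial σ R :=
  AlgEquiv.ofAlgHom (shear q) (shear (-q)) (shear_comp_shear_neg hq) <| by
    simpa using shear_comp_shear_neg (q := -q) (by simpa using hq)

lemma shearEquiv_mem_supported_iff {q : σ → MvPolynomial σ R}
    (hq : ∀ v, q v ∈ supported R {w | q w = 0}) {s : Set σ} (hs : ∀ v ∈ s, q v = 0)
    {p : MvPolynomial σ R} : shearEquiv q hq p ∈ supported R s ↔ p ∈ supported R s := by
  refine ⟨fun h => ?_, fun h => (shear_eq_self_of_mem_supported hs h).symm ▸ h⟩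
  rw [← (shearEquiv q hq).symm_apply_apply p]
  exact (shear_eq_self_of_mem_supported (q := -q) (by simpa using hs) h).symm ▸ h

end Shear

section Blocks

variable {m : ℕ} (o : Fin m → ℕ)

lemma esymPoly_mem_supported (s : Finset (Fin m)) (k : ℕ) :
    esymPoly o s k ∈ supported ℂ {v : Idx o | v.1 ∈ s} := by
  refine Subalgebra.sum_mem _ fun t ht => Subalgebra.prod_mem _ fun v hv => ?_
  have hv' := (Finset.mem_powersetCard.1 ht).1 hv
  simp only [alphF, Finset.mem_filter] at hv'
  exact X_mem_supported.2 hv'.2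

lemma esymPoly_singleton (l : Fin m) (k : ℕ) :
    esymPoly o {l} k = rename (Sigma.mk l) (esymm (Fin (o l)) ℂ k) := by
  have halph : alphF o {l} = Finset.univ.map (Function.Embedding.sigmaMk l) := by
    ext ⟨l', j⟩
    simp only [alphF, Finset.mem_filter, Finset.mem_univ, true_and, Finset.mem_singleton,
      Finset.mem_map, Function.Embedding.sigmaMk_apply]
    constructor
    · rintro rfl; exact ⟨j, rfl⟩
    · rintro ⟨_, h⟩; exact (congrArg Sigma.fst h).symm
  rw [esymPoly, esymm, halph, Finset.powersetCard_map, Finset.sum_map, map_sum]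
  refine Finset.sum_congr rfl fun t _ => ?_
  simp [Finset.mapEmbedding_apply, Finset.prod_map, map_prod]

def blockEsymm : MvPolynomial (Idx o) ℂ →ₐ[ℂ] MvPolynomial (Idx o) ℂ :=
  aeval fun v : Idx o => esymPoly o {v.1} (v.2 + 1)

lemma blockEsymm_X (v : Idx o) : blockEsymm o (X v) = esymPoly o {v.1} (v.2 + 1) :=
  aeval_X _ _

lemma killVars_esymPoly_singleton (l : Fin m) {k : ℕ} (hk : k ≠ 0) :
    killVars {v : Idx o | v.1 = l} (esymPoly o {l} k) = 0 := by
  rw [esymPoly, map_sum]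
  refine Finset.sum_eq_zero fun t ht => ?_
  obtain ⟨htl, htk⟩ := Finset.mem_powersetCard.1 ht
  obtain ⟨v, hv⟩ : t.Nonempty := Finset.card_ne_zero.1 (htk ▸ hk)
  have hvl := htl hv
  simp only [alphF, Finset.mem_filter, Finset.mem_singleton] at hvl
  rw [map_prod]
  exact Finset.prod_eq_zero hv (killVars_X_of_mem hvl.2)

-- `killVars` kills the elementary symmetric polynomials of the alphabet `l` and fixes the others.
lemma killVars_comp_blockEsymm (l : Fin m) :
    (killVars {v : Idx o | v.1 = l}).comp (blockEsymm o) =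
      (blockEsymm o).comp (killVars {v : Idx o | v.1 = l}) := by
  refine algHom_ext fun ⟨l', j⟩ => ?_
  simp only [AlgHom.comp_apply, blockEsymm_X]
  by_cases hl : l' = l
  · subst hl
    rw [killVars_X_of_mem (s := {v : Idx o | v.1 = l'}) rfl, map_zero,
      killVars_esymPoly_singleton o _ (Nat.succ_ne_zero _)]
  · rw [killVars_X_of_notMem (s := {v : Idx o | v.1 = l}) hl, blockEsymm_X,
      ← mem_supported_compl_iff_killVars_eq_self]
    refine supported_mono ?_ (esymPoly_mem_supported o {l'} _)
    intro v hv hvl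
    exact hl ((Finset.mem_singleton.1 hv).symm.trans hvl)

end Blocks

section Nested

variable (o : Fin 3 → ℕ)

abbrev Nested : Type :=
  MvPolynomial (Fin (o 0)) (MvPolynomial (Fin (o 1)) (MvPolynomial (Fin (o 2)) ℂ))

def splitIdx : Idx o ≃ Fin (o 0) ⊕ (Fin (o 1) ⊕ Fin (o 2)) where
  toFun
    | ⟨0, j⟩ => .inl j
    | ⟨1, j⟩ => .inr (.inl j)
    | ⟨2, j⟩ => .inr (.inr j)
  invFun
    | .inl j => ⟨0, j⟩
    | .inr (.inl j) => ⟨1, j⟩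
    | .inr (.inr j) => ⟨2, j⟩
  left_inv := fun ⟨l, j⟩ => by fin_cases l <;> rfl
  right_inv q := by rcases q with j | j | j <;> rfl

def toNested : MvPolynomial (Idx o) ℂ ≃ₐ[ℂ] Nested o :=
  (renameEquiv ℂ (splitIdx o)).trans
    ((sumAlgEquiv ℂ _ _).trans (mapAlgEquiv _ (sumAlgEquiv ℂ _ _)))

@[simp] lemma toNested_C (r : ℂ) : toNested o (C r) = C (C (C r)) :=
  (toNested o).commutes r

@[simp] lemma toNested_X_zero (j : Fin (o 0)) : toNested o (X ⟨0, j⟩) = X j := by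
  simp [toNested, splitIdx]

@[simp] lemma toNested_X_one (j : Fin (o 1)) : toNested o (X ⟨1, j⟩) = C (X j) := by
  simp [toNested, splitIdx]

@[simp] lemma toNested_X_two (j : Fin (o 2)) : toNested o (X ⟨2, j⟩) = C (C (X j)) := by
  simp [toNested, splitIdx]

def esymmNested : Nested o →+* Nested o :=
  esymmMap (o 0) (esymmMap (o 1) (esymmMap (o 2) (RingHom.id ℂ)))

lemma esymmNested_injective : Function.Injective (esymmNested o) :=
  esymmMap_injective _ (esymmMap_injective _ (esymmMap_injective _ Function.injective_id))

-- The trailing `Unit` indexes the trivial action on the coefficients `ℂ`.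
def blockAction :
    Equiv.Perm (Fin (o 0)) × (Equiv.Perm (Fin (o 1)) × (Equiv.Perm (Fin (o 2)) × Unit)) →
      Nested o →+* Nested o :=
  liftAction (o 0) (liftAction (o 1) (liftAction (o 2) fun _ : Unit => RingHom.id ℂ))

lemma mem_range_esymmNested_iff (p : Nested o) :
    p ∈ Set.range (esymmNested o) ↔ ∀ x, blockAction o x p = p :=
  mem_range_esymmMap_iff _ (esymmMap_injective _ (esymmMap_injective _ Function.injective_id)) _
    (liftAction_one _ (liftAction_one _ (i₀ := ()) rfl))
    (mem_range_esymmMap_iff _ (esymmMap_injective _ Function.injective_id) _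
      (liftAction_one _ (i₀ := ()) rfl)
      (mem_range_esymmMap_iff _ Function.injective_id _ (i₀ := ()) rfl fun s => by simp)) p

lemma toNested_blockEsymm (p : MvPolynomial (Idx o) ℂ) :
    toNested o (blockEsymm o p) = esymmNested o (toNested o p) := by
  suffices h : (toNested o : MvPolynomial (Idx o) ℂ →+* Nested o).comp (blockEsymm o : _ →+* _) =
      (esymmNested o).comp (toNested o : MvPolynomial (Idx o) ℂ →+* Nested o) from congr($h p)
  refine ringHom_ext (fun r => by simp [esymmNested, esymmMap_C]) fun ⟨l, j⟩ => ?_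
  fin_cases l <;>
    simp [blockEsymm_X, esymPoly_singleton, esymm, esymmNested, esymmMap_C, esymmMap_X]

lemma toNested_rename_permIdx (g : ∀ l, Equiv.Perm (Fin (o l))) (p : MvPolynomial (Idx o) ℂ) :
    toNested o (rename (permIdx o g) p) = blockAction o (g 0, g 1, g 2, ()) (toNested o p) := by
  suffices h : (toNested o : MvPolynomial (Idx o) ℂ →+* Nested o).comp
      ((rename (permIdx o g) : MvPolynomial (Idx o) ℂ →ₐ[ℂ] _) : _ →+* _) =
      (blockAction o (g 0, g 1, g 2, ())).comp (toNested o : MvPolynomial (Idx o) ℂ →+* Nested o)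
    from congr($h p)
  refine ringHom_ext (fun r => ?_) fun ⟨l, j⟩ => ?_
  · simp only [RingHom.comp_apply, RingHom.coe_coe, rename_C, toNested_C, blockAction, liftAction,
      AlgHom.toRingHom_eq_coe, map_C, RingHom.id_apply]
  · fin_cases l <;> simp [blockAction, liftAction, permIdx]

def permOfTriple
    (x : Equiv.Perm (Fin (o 0)) × (Equiv.Perm (Fin (o 1)) × (Equiv.Perm (Fin (o 2)) × Unit))) :
    ∀ l, Equiv.Perm (Fin (o l))
  | 0 => x.1
  | 1 => x.2.1
  | 2 => x.2.2.1

lemma mem_sep_iff_mem_range_esymmNested (p : MvPolynomial (Idx o) ℂ) :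
    p ∈ sep o ↔ toNested o p ∈ Set.range (esymmNested o) := by
  rw [mem_sep, mem_range_esymmNested_iff]
  refine ⟨fun h x => ?_, fun h g => (toNested o).injective ?_⟩
  · have hx : (permOfTriple o x 0, permOfTriple o x 1, permOfTriple o x 2, ()) = x := rfl
    simpa [toNested_rename_permIdx, hx] using congr_arg (toNested o) (h (permOfTriple o x))
  · rw [toNested_rename_permIdx, h]

end Nested

section Sequence

variable (o : Fin 3 → ℕ)

lemma blockEsymm_injective : Function.Injective (blockEsymm o) := fun a b hab =>
  (toNested o).injective <| esymmNested_injective o <| by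
    rw [← toNested_blockEsymm, ← toNested_blockEsymm, hab]

lemma mem_sep_iff_mem_range_blockEsymm (p : MvPolynomial (Idx o) ℂ) :
    p ∈ sep o ↔ p ∈ Set.range (blockEsymm o) := by
  rw [mem_sep_iff_mem_range_esymmNested]
  constructor
  · rintro ⟨y, hy⟩
    obtain ⟨x, rfl⟩ := (toNested o).surjective y
    exact ⟨x, (toNested o).injective (by rw [toNested_blockEsymm, hy])⟩
  · rintro ⟨x, rfl⟩
    exact ⟨toNested o x, (toNested_blockEsymm o x).symm⟩

def blockEsymmEquiv : MvPolynomial (Idx o) ℂ ≃ₐ[ℂ] sep o :=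
  AlgEquiv.ofBijective
    ((blockEsymm o).codRestrict (sep o) fun x => (mem_sep_iff_mem_range_blockEsymm o _).2 ⟨x, rfl⟩)
    ⟨fun _ _ hab => blockEsymm_injective o (congrArg Subtype.val hab), fun ⟨p, hp⟩ =>
      let ⟨x, hx⟩ := (mem_sep_iff_mem_range_blockEsymm o p).1 hp; ⟨x, Subtype.ext hx⟩⟩

lemma coe_blockEsymmEquiv (x : MvPolynomial (Idx o) ℂ) :
    (blockEsymmEquiv o x : MvPolynomial (Idx o) ℂ) = blockEsymm o x := rfl

lemma mem_T13_iff (f : sep o) :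
    f ∈ T13 o ↔ (f : MvPolynomial (Idx o) ℂ) ∈ supported ℂ {v | v.1 = 0}ᶜ :=
  Iff.rfl

lemma blockEsymmEquiv_mem_T13_iff (x : MvPolynomial (Idx o) ℂ) :
    blockEsymmEquiv o x ∈ T13 o ↔ x ∈ supported ℂ {v : Idx o | v.1 = 0}ᶜ := by
  rw [mem_T13_iff, coe_blockEsymmEquiv, mem_supported_compl_iff_killVars_eq_self,
    mem_supported_compl_iff_killVars_eq_self, ← AlgHom.comp_apply, killVars_comp_blockEsymm,
    AlgHom.comp_apply, (blockEsymm_injective o).eq_iff]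

lemma Esub_mem_T13 {s : Finset (Fin 3)} (hs : 0 ∉ s) (k : ℕ) : Esub o s k ∈ T13 o := by
  refine supported_mono ?_ (esymPoly_mem_supported o s k)
  intro v hv hv0
  exact hs (hv0 ▸ hv)

def lowerEsymm (k : ℕ) : MvPolynomial (Idx o) ℂ :=
  (blockEsymmEquiv o).symm (Esub o {1, 2} k)

lemma lowerEsymm_mem_supported (k : ℕ) : lowerEsymm o k ∈ supported ℂ {v : Idx o | v.1 = 0}ᶜ := by
  rw [← blockEsymmEquiv_mem_T13_iff, lowerEsymm, AlgEquiv.apply_symm_apply]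
  exact Esub_mem_T13 o (by decide) k

def shearVec (v : Idx o) : MvPolynomial (Idx o) ℂ :=
  if v.1 = 0 then -lowerEsymm o (v.2 + 1) else 0

lemma shearVec_eq_zero {v : Idx o} (hv : v ∈ {v : Idx o | v.1 = 0}ᶜ) : shearVec o v = 0 :=
  if_neg hv

lemma shearVec_mem_supported (v : Idx o) :
    shearVec o v ∈ supported ℂ {w | shearVec o w = 0} := by
  refine supported_mono (fun w hw => shearVec_eq_zero o hw) ?_
  unfold shearVec
  split_ifs
  · exact neg_mem (lowerEsymm_mem_supported o _)
  · exact zero_mem _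

def seqEquiv : MvPolynomial (Idx o) ℂ ≃ₐ[ℂ] sep o :=
  (shearEquiv (shearVec o) (shearVec_mem_supported o)).trans (blockEsymmEquiv o)

lemma seqEquiv_X_zero (a : Fin (o 0)) :
    seqEquiv o (X ⟨0, a⟩) = Esub o {0} (a + 1) - Esub o {1, 2} (a + 1) := by
  have h : shearEquiv (shearVec o) (shearVec_mem_supported o) (X ⟨0, a⟩) =
      X ⟨0, a⟩ - lowerEsymm o (a + 1) := by
    simp [shearEquiv, shear_X, shearVec, sub_eq_add_neg]
  rw [seqEquiv, AlgEquiv.trans_apply, h, map_sub, lowerEsymm, AlgEquiv.apply_symm_apply]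
  exact congrArg (· - _) (Subtype.ext (blockEsymm_X o _))

lemma seqEquiv_mem_T13_iff (x : MvPolynomial (Idx o) ℂ) :
    seqEquiv o x ∈ T13 o ↔ x ∈ supported ℂ {v : Idx o | v.1 = 0}ᶜ := by
  rw [seqEquiv, AlgEquiv.trans_apply, blockEsymmEquiv_mem_T13_iff,
    shearEquiv_mem_supported_iff _ fun _ => shearVec_eq_zero o]

lemma seqEquiv_mem_map_iff {J : Ideal (MvPolynomial (Idx o) ℂ)} {x : MvPolynomial (Idx o) ℂ} :
    seqEquiv o x ∈ J.map (seqEquiv o) ↔ x ∈ J :=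
  Ideal.apply_mem_of_equiv_iff (f := (seqEquiv o).toRingEquiv)

lemma span_seq13_take (t : ℕ) :
    Ideal.span {x | x ∈ (seq13 o).take t} =
      Ideal.map (seqEquiv o) (Ideal.span (X '' {v : Idx o | v.1 = 0 ∧ (v.2 : ℕ) < t})) := by
  rw [Ideal.map_span, ← Set.image_comp]
  congr 1
  ext x
  simp only [Set.mem_ofPred_eq, seq13, ← List.map_take, List.take_range, List.mem_map,
    List.mem_range, lt_min_iff, Set.mem_image, Function.comp_apply]
  constructor
  · rintro ⟨a, ⟨hat, hao⟩, rfl⟩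
    exact ⟨⟨0, ⟨a, hao⟩⟩, ⟨rfl, hat⟩, seqEquiv_X_zero o _⟩
  · rintro ⟨⟨l, j⟩, ⟨rfl, hj⟩, rfl⟩
    exact ⟨j, ⟨hj, j.2⟩, (seqEquiv_X_zero o j).symm⟩

lemma span_seq13 :
    Ideal.span {x | x ∈ seq13 o} =
      Ideal.map (seqEquiv o) (Ideal.span (X '' {v : Idx o | v.1 = 0})) := by
  have hs : {v : Idx o | v.1 = 0 ∧ (v.2 : ℕ) < (seq13 o).length} = {v | v.1 = 0} := by
    ext ⟨l, j⟩
    simp only [Set.mem_ofPred_eq, and_iff_left_iff_imp]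
    rintro rfl
    simp [seq13]
  simpa [hs] using span_seq13_take o (seq13 o).length

end Sequence

theorem statement13_general (o : Fin 3 → ℕ) :
    (∀ (t : ℕ) (ht : t < (seq13 o).length),
        Ideal.Quotient.mk (Ideal.span {x | x ∈ (seq13 o).take t}) ((seq13 o).get ⟨t, ht⟩) ∈
          nonZeroDivisors ((sep o) ⧸ Ideal.span {x | x ∈ (seq13 o).take t})) ∧
      Function.Bijective
        ⇑((Ideal.Quotient.mkₐ ℂ (Ideal.span {x | x ∈ seq13 o})).comp (T13 o).val) := by
  refine ⟨fun t ht => ?_, bijective_quotient_mkₐ_comp_val _ _ (fun f hf hfI => ?_) fun a => ?_⟩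
  · have ht0 : t < o 0 := by simpa [seq13] using ht
    have hget : (seq13 o).get ⟨t, ht⟩ = seqEquiv o (X ⟨0, ⟨t, ht0⟩⟩) := by
      simp [seq13, seqEquiv_X_zero]
    have : (Ideal.span {x | x ∈ (seq13 o).take t}).IsPrime := span_seq13_take o t ▸ inferInstance
    refine mem_nonZeroDivisors_of_ne_zero ?_
    rw [hget, Ne, Ideal.Quotient.eq_zero_iff_mem, span_seq13_take, seqEquiv_mem_map_iff,
      X_mem_span_X_image_iff]
    simp
  · rw [← (seqEquiv o).apply_symm_apply f] at hf hfI ⊢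
    rw [seqEquiv_mem_T13_iff] at hf
    rw [span_seq13, seqEquiv_mem_map_iff] at hfI
    rw [eq_zero_of_mem_supported_compl_of_mem_span hf hfI, map_zero]
  · obtain ⟨x, rfl⟩ := (seqEquiv o).surjective a
    refine ⟨seqEquiv o (killVars _ x), (seqEquiv_mem_T13_iff o _).2 (killVars_mem_supported x), ?_⟩
    rw [span_seq13, ← map_sub, seqEquiv_mem_map_iff]
    exact sub_killVars_mem_span_X_image x

/-- With `|X'| = |X_1| + |X_2|`: (i) the sequence
`e_a(X') − e_a(X_1 ⊔ X_2)`, `a = 1, …, |X'|`, is a regular sequence in `R` (each term is a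
non-zero-divisor in the quotient by its predecessors); and (ii) writing `I` for the ideal it
generates, the composite of the inclusion of the subalgebra of `R` of polynomials in the
variables of `X_1 ⊔ X_2` only with the quotient map `R → R/I` is an isomorphism of
`ℂ`-algebras. -/
theorem statement13 (o : Fin 3 → ℕ) (h : o 0 = o 1 + o 2) :
    (∀ (t : ℕ) (ht : t < (seq13 o).length),
        Ideal.Quotient.mk (Ideal.span {x | x ∈ (seq13 o).take t}) ((seq13 o).get ⟨t, ht⟩) ∈
          nonZeroDivisors ((sep o) ⧸ Ideal.span {x | x ∈ (seq13 o).take t})) ∧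
      Function.Bijective
        ⇑((Ideal.Quotient.mkₐ ℂ (Ideal.span {x | x ∈ seq13 o})).comp (T13 o).val) :=
  statement13_general o
end
end
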